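/- arXiv:2604.09109 — 3 statements merged into one kernel-verified Lean document; each statement's English description precedes it below -/
import Mathlib

section
/- Monotonicity of the approximating drivers: For every integer m ≥ 1, every z ∈ ℝ, and every Borel function u : ℝ → ℝ with ∫ u² dν < ∞, the quantities f_m(z,u) and f_{m+1}(z,u) are well defined and satisfy f_m(z,u) ≤ f_{m+1}(z,u). -/
open MeasureTheory Set

noncomputable section

/-- The exponential penalty function `h_λ(x) = (e^{λx} − λx − 1)/λ`. -/
def hpen (lam x : ℝ) : ℝ := (Real.exp (lam * x) - lam * x - 1) / lam

/-- `φ(x) = arctan x` for `x > 0`, `φ(x) = x` for `x ≤ 0`. -/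
def phi0 (x : ℝ) : ℝ := if 0 < x then Real.arctan x else x

/-- The truncation from above `φ_m(x) = φ(x − m) + m`. -/
def phim (m : ℕ) (x : ℝ) : ℝ := phi0 (x - m) + m

/-- The plateau truncation `ρ_m`. -/
def rhom (m : ℕ) (x : ℝ) : ℝ :=
  if -((m : ℝ) + 1) < x ∧ x < -(m : ℝ) then x + m + 1
  else if -(m : ℝ) ≤ x ∧ x ≤ (m : ℝ) then 1
  else if (m : ℝ) < x ∧ x ≤ (m : ℝ) + 1 then (m : ℝ) + 1 - x
  else 0

/-- `ν_m`: the restriction of `ν` to `ℝ \ [−1/m, 1/m]`. -/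
def numeas (ν : Measure ℝ) (m : ℕ) : Measure ℝ :=
  ν.restrict (Set.Icc (-(1 / (m : ℝ))) (1 / (m : ℝ)))ᶜ

/-- The truncated no-signal part `f¹_m(z,u,p)` of the driver. -/
def f1m (ν : Measure ℝ) (η γ : ℝ → ℝ) (lam Cke : ℝ) (m : ℕ)
    (z : ℝ) (u : ℝ → ℝ) (p : ℝ) : ℝ :=
  lam / 2 * (p - (z + Cke / lam)) ^ 2 * rhom m z
    + (∫ e in {e | γ e = 0}, hpen lam (phim m (u e - p * η e)) ∂(numeas ν m))
    - p * ∫ e in {e | γ e = 0}, η e ∂ν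

/-- The truncated signal part `f²_m(g,u,p)` of the driver. -/
def f2m (η γ : ℝ → ℝ) (K : ℝ → Measure ℝ) (lam : ℝ) (m : ℕ)
    (g : ℝ) (u : ℝ → ℝ) (p : ℝ) : ℝ :=
  (∫ e in {e | γ e = g},
      (if 1 / (m : ℝ) < |e| then hpen lam (phim m (u e - p * η e)) else 0) ∂(K g))
    - p * ∫ e in {e | γ e = g}, η e ∂(K g)

/-- The truncated driver `f_m(z,u)`. -/
def fm (ν μ : Measure ℝ) (η γ : ℝ → ℝ) (K : ℝ → Measure ℝ)
    (lam Cke pil pib : ℝ) (m : ℕ) (z : ℝ) (u : ℝ → ℝ) : ℝ :=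
  (⨅ p : Set.Icc (-pil) pib, f1m ν η γ lam Cke m z u p)
    + (∫ g in ({0}ᶜ : Set ℝ), (⨅ p : Set.Icc (-pil) pib, f2m η γ K lam m g u p) ∂μ)
    - Cke * z - Cke ^ 2 / (2 * lam)

/-!
Pointwise in `p`, every ingredient of `f_m` grows with `m`: `ρ_m ≤ ρ_{m+1}`; `φ_m ≤ φ_{m+1}` because
`φ` is 1-Lipschitz, and then `h_λ ∘ φ_m ≤ h_λ ∘ φ_{m+1}` because `φ_m` differs from the identity only
where it is `≥ m ≥ 0`, on which `h_λ` is increasing; the cut-offs `{|e| > 1/m}` and the measures `ν_m`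
increase. Infima over `p` and the `μ`-integral preserve these inequalities once everything is
integrable. Since `ν{|e| > δ} < ∞` and `u ∈ L²(ν)`, all integrands are dominated by
`1_{|e| > δ} (C + |u| + P|η|) + P|η| ∈ L¹(ν)`. The disintegration `ν|_{γ ≠ 0} = ∫ K g μ(dg)` carries
this over to `μ`-almost every `K g` and to integrability in `g`, and continuity in `p` (dominated
convergence) lets the infimum over `p` be taken along a countable dense set, which makes it
measurable in `g`.
-/

namespace Driver

open Real

lemma lipschitzWith_arctan : LipschitzWith 1 arctan := by
  refine lipschitzWith_of_nnnorm_deriv_le differentiable_arctan fun x => ?_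
  rw [Real.deriv_arctan, ← NNReal.coe_le_coe, coe_nnnorm, Real.norm_eq_abs,
    abs_of_pos (by positivity), NNReal.coe_one, div_le_one (by positivity)]
  nlinarith [sq_nonneg x]

lemma abs_arctan_le (x : ℝ) : |arctan x| ≤ |x| := by
  simpa [Real.dist_eq] using lipschitzWith_arctan.dist_le_mul x 0

lemma phi0_eq_min (x : ℝ) : phi0 x = min x (arctan x) := by
  have h := abs_le.1 (abs_arctan_le x)
  rcases lt_or_ge 0 x with hx | hx
  · rw [phi0, if_pos hx, min_eq_right]
    linarith [abs_of_pos hx, le_abs_self (arctan x)]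
  · rw [phi0, if_neg hx.not_gt, min_eq_left]
    linarith [abs_of_nonpos hx, neg_abs_le (arctan x)]

lemma lipschitzWith_phi0 : LipschitzWith 1 phi0 := by
  have h := LipschitzWith.id.min lipschitzWith_arctan
  rw [max_self] at h
  exact funext phi0_eq_min ▸ h

lemma phi0_le_self (x : ℝ) : phi0 x ≤ x := by
  rw [phi0_eq_min]; exact min_le_left _ _

lemma phi0_le_two (x : ℝ) : phi0 x ≤ 2 := by
  rw [phi0_eq_min]
  linarith [min_le_right x (arctan x), arctan_lt_pi_div_two x, pi_lt_four]

lemma phim_of_le {m : ℕ} {x : ℝ} (h : x ≤ m) : phim m x = x := by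
  rw [phim, phi0, if_neg (by linarith)]; ring

lemma le_phim_of_lt {m : ℕ} {x : ℝ} (h : (m : ℝ) < x) : (m : ℝ) ≤ phim m x := by
  rw [phim, phi0, if_pos (by linarith)]
  linarith [arctan_nonneg.2 (sub_nonneg.2 h.le)]

lemma phim_le_self (m : ℕ) (x : ℝ) : phim m x ≤ x := by
  rw [phim]; linarith [phi0_le_self (x - m)]

lemma phim_le_add_two (m : ℕ) (x : ℝ) : phim m x ≤ m + 2 := by
  rw [phim]; linarith [phi0_le_two (x - m)]

lemma abs_phim_le (m : ℕ) (x : ℝ) : |phim m x| ≤ |x| + m := by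
  rcases le_or_gt x m with h | h
  · rw [phim_of_le h]; linarith [Nat.cast_nonneg (α := ℝ) m]
  · rw [abs_of_nonneg ((Nat.cast_nonneg m).trans (le_phim_of_lt h))]
    linarith [phim_le_self m x, le_abs_self x, Nat.cast_nonneg (α := ℝ) m]

lemma phim_le_phim_succ (m : ℕ) (x : ℝ) : phim m x ≤ phim (m + 1) x := by
  have h := lipschitzWith_phi0.dist_le_mul (x - m) (x - (m + 1))
  rw [Real.dist_eq, Real.dist_eq, NNReal.coe_one, one_mul, show x - m - (x - (m + 1)) = 1 by ring,
    abs_one] at h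
  simp only [phim, Nat.cast_succ]
  linarith [le_abs_self (phi0 (x - m) - phi0 (x - (m + 1)))]

lemma continuous_phim (m : ℕ) : Continuous (phim m) :=
  (lipschitzWith_phi0.continuous.comp (continuous_sub_right _)).add continuous_const

lemma continuous_hpen (lam : ℝ) : Continuous (hpen lam) := by
  unfold hpen; fun_prop

lemma hpen_nonneg {lam : ℝ} (hlam : 0 < lam) (x : ℝ) : 0 ≤ hpen lam x :=
  div_nonneg (by linarith [add_one_le_exp (lam * x)]) hlam.le

lemma hpen_le_hpen {lam : ℝ} (hlam : 0 < lam) {a b : ℝ} (ha : 0 ≤ a) (hab : a ≤ b) :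
    hpen lam a ≤ hpen lam b := by
  have hexp_a : 1 ≤ exp (lam * a) := one_le_exp (by positivity)
  have hexp_gap := add_one_le_exp (lam * (b - a))
  have hsplit : exp (lam * b) = exp (lam * a) * exp (lam * (b - a)) := by
    rw [← exp_add]; ring_nf
  have hgap : 0 ≤ lam * (b - a) := mul_nonneg hlam.le (by linarith)
  refine div_le_div_of_nonneg_right ?_ hlam.le
  nlinarith

lemma hpen_phim_le_hpen_phim_succ {lam : ℝ} (hlam : 0 < lam) (m : ℕ) (x : ℝ) :
    hpen lam (phim m x) ≤ hpen lam (phim (m + 1) x) := by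
  rcases le_or_gt x m with h | h
  · rw [phim_of_le h, phim_of_le (h.trans (by simp))]
  · exact hpen_le_hpen hlam ((Nat.cast_nonneg m).trans (le_phim_of_lt h)) (phim_le_phim_succ m x)

lemma hpen_le_of_le {lam : ℝ} (hlam : 0 < lam) {M y : ℝ} (hy : y ≤ M) :
    hpen lam y ≤ exp (lam * M) / lam + |y| := by
  have h1 : exp (lam * y) ≤ exp (lam * M) := exp_le_exp.2 (by nlinarith)
  have h2 : -(lam * y) ≤ lam * |y| := by nlinarith [neg_abs_le y]
  rw [hpen, div_add' _ _ _ hlam.ne', div_le_div_iff_of_pos_right hlam]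
  linarith

lemma hpen_phim_le {lam : ℝ} (hlam : 0 < lam) {k n : ℕ} (hkn : k ≤ n) (x : ℝ) :
    hpen lam (phim k x) ≤ exp (lam * (n + 2)) / lam + n + |x| := by
  have hk : (k : ℝ) ≤ n := by exact_mod_cast hkn
  have := hpen_le_of_le hlam ((phim_le_add_two k x).trans (by linarith : (k : ℝ) + 2 ≤ n + 2))
  linarith [abs_phim_le k x]

lemma rhom_eq (m : ℕ) (x : ℝ) : rhom m x = max 0 (min 1 (m + 1 - |x|)) := by
  have hm := Nat.cast_nonneg (α := ℝ) m
  unfold rhom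
  rcases abs_cases x with ⟨hx, _⟩ | ⟨hx, _⟩ <;> rw [hx] <;> split_ifs <;> grind

lemma rhom_nonneg (m : ℕ) (x : ℝ) : 0 ≤ rhom m x := by
  rw [rhom_eq]; exact le_max_left _ _

lemma rhom_le_rhom_succ (m : ℕ) (x : ℝ) : rhom m x ≤ rhom (m + 1) x := by
  rw [rhom_eq, rhom_eq, Nat.cast_succ]; gcongr; linarith

def truncPen (lam : ℝ) (m : ℕ) (u η : ℝ → ℝ) (p e : ℝ) : ℝ :=
  if 1 / (m : ℝ) < |e| then hpen lam (phim m (u e - p * η e)) else 0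

section TruncPen

variable {lam : ℝ} {u η : ℝ → ℝ}

lemma truncPen_nonneg (hlam : 0 < lam) (m : ℕ) (p e : ℝ) : 0 ≤ truncPen lam m u η p e := by
  unfold truncPen; split_ifs <;> simp [hpen_nonneg hlam]

lemma truncPen_le_truncPen_succ (hlam : 0 < lam) {m : ℕ} (hm : 1 ≤ m) (p e : ℝ) :
    truncPen lam m u η p e ≤ truncPen lam (m + 1) u η p e := by
  have hlt : 1 / ((m + 1 : ℕ) : ℝ) < 1 / m := by
    gcongr
    exact_mod_cast m.lt_succ_self
  unfold truncPen
  split_ifs with h₁ h₂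
  · exact hpen_phim_le_hpen_phim_succ hlam m _
  · exact absurd (hlt.trans h₁) h₂
  · exact hpen_nonneg hlam _
  · exact le_rfl

lemma truncPen_le (hlam : 0 < lam) {k n : ℕ} (hk : 1 ≤ k) (hkn : k ≤ n) (p e : ℝ) :
    truncPen lam k u η p e ≤ {e | 1 / (n : ℝ) < |e|}.indicator
      (fun e => exp (lam * (n + 2)) / lam + n + |u e - p * η e|) e := by
  have hle : 1 / (n : ℝ) ≤ 1 / k := by gcongr
  unfold truncPen
  split_ifs with h
  · rw [indicator_of_mem (show e ∈ {e | 1 / (n : ℝ) < |e|} from hle.trans_lt h)]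
    exact hpen_phim_le hlam hkn _
  · exact indicator_nonneg (fun e _ => by positivity) e

lemma measurable_truncPen (hu : Measurable u) (hη : Measurable η) (m : ℕ) (p : ℝ) :
    Measurable (truncPen lam m u η p) :=
  Measurable.ite (measurableSet_lt measurable_const measurable_abs)
    ((continuous_hpen lam).measurable.comp ((continuous_phim m).measurable.comp
      (hu.sub (hη.const_mul p)))) measurable_const

lemma continuous_truncPen_param (m : ℕ) (e : ℝ) :
    Continuous fun p => truncPen lam m u η p e := by
  unfold truncPen
  split_ifs
  · exact (continuous_hpen lam).comp ((continuous_phim m).comp (by fun_prop))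
  · exact continuous_const

def truncPenBound (lam : ℝ) (n : ℕ) (P : ℝ) (u η : ℝ → ℝ) (e : ℝ) : ℝ :=
  {e | 1 / (n : ℝ) < |e|}.indicator
    (fun e => exp (lam * (n + 2)) / lam + n + (|u e| + P * |η e|)) e + P * |η e|

lemma truncPen_le_truncPenBound (hlam : 0 < lam) {k n : ℕ} (hk : 1 ≤ k) (hkn : k ≤ n) {p P : ℝ}
    (hp : |p| ≤ P) (e : ℝ) :
    truncPen lam k u η p e + |p * η e| ≤ truncPenBound lam n P u η e := by
  have h₁ : |u e - p * η e| ≤ |u e| + P * |η e| := by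
    have := abs_sub (u e) (p * η e)
    rw [abs_mul] at this
    nlinarith [abs_nonneg (η e)]
  have h₂ : |p * η e| ≤ P * |η e| := by rw [abs_mul]; gcongr
  unfold truncPenBound
  gcongr
  exact (truncPen_le hlam hk hkn p e).trans
    (indicator_le_indicator (by gcongr))

lemma abs_truncPen_sub_le (hlam : 0 < lam) {k n : ℕ} (hk : 1 ≤ k) (hkn : k ≤ n) {p P : ℝ}
    (hp : |p| ≤ P) (e : ℝ) :
    |truncPen lam k u η p e - p * η e| ≤ truncPenBound lam n P u η e := by
  have := truncPen_le_truncPenBound (u := u) (η := η) hlam hk hkn hp e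
  have := abs_sub (truncPen lam k u η p e) (p * η e)
  rw [abs_of_nonneg (truncPen_nonneg hlam k p e)] at this
  linarith

lemma measurable_truncPenBound (hu : Measurable u) (hη : Measurable η) (n : ℕ) (P : ℝ) :
    Measurable (truncPenBound lam n P u η) :=
  ((measurable_const.add (hu.abs.add (hη.abs.const_mul P))).indicator
    (measurableSet_lt measurable_const measurable_abs)).add (hη.abs.const_mul P)

end TruncPen

section ParametricInfimum

variable {α β X : Type*} [MeasurableSpace α] [MeasurableSpace β] {μ : Measure β}
  {K : β → Measure α}

lemma abs_ciInf_le_of_abs_le {ι : Sort*} [Nonempty ι] {f : ι → ℝ} {B : ℝ}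
    (h : ∀ i, |f i| ≤ B) : |⨅ i, f i| ≤ B := by
  have hbdd : BddBelow (range f) := ⟨-B, by rintro _ ⟨i, rfl⟩; exact (abs_le.1 (h i)).1⟩
  obtain ⟨i⟩ := ‹Nonempty ι›
  exact abs_le.2 ⟨le_ciInf fun j => (abs_le.1 (h j)).1, (ciInf_le hbdd i).trans (abs_le.1 (h i)).2⟩

lemma ae_integrable_of_integrable_bind (hK : Measurable K) {f : α → ℝ} (hf : Measurable f)
    (hint : Integrable f (μ.bind K)) : ∀ᵐ g ∂μ, Integrable f (K g) := by
  have h := hint.2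
  rw [HasFiniteIntegral, Measure.lintegral_bind hK.aemeasurable hf.enorm.aemeasurable] at h
  filter_upwards [ae_lt_top ((Measure.measurable_lintegral hf.enorm).comp hK) h.ne] with g hg
  exact ⟨hf.aestronglyMeasurable, hg⟩

lemma aemeasurable_integral_of_ae_integrable (hK : Measurable K) {f : α → ℝ} (hf : Measurable f)
    (hint : ∀ᵐ g ∂μ, Integrable f (K g)) : AEMeasurable (fun g => ∫ e, f e ∂(K g)) μ := by
  refine ⟨fun g => (∫⁻ e, ENNReal.ofReal (f e) ∂(K g)).toReal
    - (∫⁻ e, ENNReal.ofReal (-f e) ∂(K g)).toReal, ?_, ?_⟩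
  · exact (((Measure.measurable_lintegral hf.ennreal_ofReal).comp hK).ennreal_toReal).sub
      (((Measure.measurable_lintegral hf.neg.ennreal_ofReal).comp hK).ennreal_toReal)
  · filter_upwards [hint] with g hg
    exact integral_eq_lintegral_pos_part_sub_lintegral_neg_part hg

lemma integrable_integral_of_integrable_bind (hK : Measurable K) {f : α → ℝ} (hf : Measurable f)
    (hint : Integrable f (μ.bind K)) : Integrable (fun g => ∫ e, f e ∂(K g)) μ := by
  refine ⟨(aemeasurable_integral_of_ae_integrable hK hf
    (ae_integrable_of_integrable_bind hK hf hint)).aestronglyMeasurable, ?_⟩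
  calc ∫⁻ g, ‖∫ e, f e ∂(K g)‖ₑ ∂μ ≤ ∫⁻ g, ∫⁻ e, ‖f e‖ₑ ∂(K g) ∂μ :=
        lintegral_mono fun g => enorm_integral_le_lintegral_enorm _
    _ = ∫⁻ e, ‖f e‖ₑ ∂(μ.bind K) :=
        (Measure.lintegral_bind hK.aemeasurable hf.enorm.aemeasurable).symm
    _ < ⊤ := hint.2

theorem integrable_iInf_integral [TopologicalSpace X] [FirstCountableTopology X]
    [TopologicalSpace.SeparableSpace X] [Nonempty X] (hK : Measurable K) {F : X → α → ℝ}
    (hFm : ∀ p, Measurable (F p)) (hFc : ∀ e, Continuous fun p => F p e) {W : α → ℝ}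
    (hWm : Measurable W) (hFW : ∀ p e, |F p e| ≤ W e) (hW : Integrable W (μ.bind K)) :
    Integrable (fun g => ⨅ p, ∫ e, F p e ∂(K g)) μ := by
  have hWK := ae_integrable_of_integrable_bind hK hWm hW
  have hFK : ∀ᵐ g ∂μ, ∀ p, Integrable (F p) (K g) := by
    filter_upwards [hWK] with g hg p
    exact hg.mono' (hFm p).aestronglyMeasurable (ae_of_all _ (hFW p))
  have hcont : ∀ᵐ g ∂μ, Continuous fun p => ∫ e, F p e ∂(K g) := by
    filter_upwards [hWK] with g hg
    exact continuous_of_dominated (fun p => (hFm p).aestronglyMeasurable)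
      (fun p => ae_of_all _ (hFW p)) hg (ae_of_all _ hFc)
  have hdense : (fun g => ⨅ p, ∫ e, F p e ∂(K g))
      =ᵐ[μ] fun g => ⨅ n, ∫ e, F (TopologicalSpace.denseSeq X n) e ∂(K g) := by
    filter_upwards [hcont] with g hg
    exact ((TopologicalSpace.denseRange_denseSeq X).ciInf' hg).symm.trans
      (iInf_range' (fun p => ∫ e, F p e ∂(K g)) _)
  refine (integrable_integral_of_integrable_bind hK hWm hW).mono'
    ((AEMeasurable.iInf fun n => aemeasurable_integral_of_ae_integrable hK (hFm _)
      (hFK.mono fun g hg => hg _)).congr hdense.symm).aestronglyMeasurable ?_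
  filter_upwards [hWK] with g hg
  exact abs_ciInf_le_of_abs_le fun p =>
    norm_integral_le_of_norm_le (f := F p) hg (ae_of_all _ (hFW p))

end ParametricInfimum

section LevyMeasure

variable {ν : Measure ℝ} {lam : ℝ} {u η : ℝ → ℝ}

lemma measure_lt_abs_lt_top (hν2 : (∫⁻ e, ENNReal.ofReal (min 1 (e ^ 2)) ∂ν) < ⊤) {δ : ℝ}
    (hδ : 0 < δ) : ν {e | δ < |e|} < ⊤ := by
  set c := ENNReal.ofReal (min 1 (δ ^ 2))
  have hc : c ≠ 0 := by simp only [c, ne_eq, ENNReal.ofReal_eq_zero, not_le]; positivity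
  have hsub : {e | δ < |e|} ⊆ {e | c ≤ ENNReal.ofReal (min 1 (e ^ 2))} := fun e he =>
    ENNReal.ofReal_le_ofReal (min_le_min_left _ (sq_lt_sq.2 (by rwa [abs_of_pos hδ])).le)
  calc ν {e | δ < |e|} ≤ (∫⁻ e, ENNReal.ofReal (min 1 (e ^ 2)) ∂ν) / c :=
        (measure_mono hsub).trans (meas_ge_le_lintegral_div (by fun_prop) hc ENNReal.ofReal_ne_top)
    _ < ⊤ := ENNReal.div_lt_top hν2.ne hc

lemma numeas_eq (m : ℕ) : numeas ν m = ν.restrict {e | 1 / (m : ℝ) < |e|} := by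
  unfold numeas
  congr 1
  ext e
  simp only [mem_compl_iff, mem_Icc, mem_ofPred_eq, ← abs_le, not_le]

lemma numeas_le_numeas_succ {m : ℕ} (hm : 1 ≤ m) : numeas ν m ≤ numeas ν (m + 1) := by
  rw [numeas_eq, numeas_eq]
  refine Measure.restrict_mono (fun e (he : 1 / (m : ℝ) < |e|) => ?_) le_rfl
  have : 1 / ((m + 1 : ℕ) : ℝ) ≤ 1 / m := by gcongr; simp
  exact this.trans_lt he

lemma integrable_of_integrable_sq {A : Set ℝ} (hA : ν A ≠ ⊤) (hu : AEStronglyMeasurable u ν)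
    (hu2 : Integrable (fun e => u e ^ 2) ν) : Integrable u (ν.restrict A) :=
  have := isFiniteMeasure_restrict.2 hA
  ((memLp_two_iff_integrable_sq hu.restrict).2 hu2.restrict).integrable one_le_two

lemma integrableOn_hpen_phim (hlam : 0 < lam) (hu : Measurable u) (hη : Measurable η)
    (hu2 : Integrable (fun e => u e ^ 2) ν) (hηint : Integrable η ν) {A : Set ℝ} (hA : ν A ≠ ⊤)
    (k : ℕ) (p : ℝ) : IntegrableOn (fun e => hpen lam (phim k (u e - p * η e))) A ν := by
  have := isFiniteMeasure_restrict.2 hA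
  have hd : Integrable (fun e => |u e - p * η e|) (ν.restrict A) :=
    ((integrable_of_integrable_sq hA hu.aestronglyMeasurable hu2).sub
      (hηint.restrict.const_mul p)).abs
  refine ((integrable_const (exp (lam * (k + 2)) / lam + k)).add hd).mono'
    ((continuous_hpen lam).measurable.comp ((continuous_phim k).measurable.comp
      (hu.sub (hη.const_mul p)))).aestronglyMeasurable (ae_of_all _ fun e => ?_)
  rw [Real.norm_eq_abs, abs_of_nonneg (hpen_nonneg hlam _)]
  exact hpen_phim_le hlam le_rfl _

lemma integrable_truncPenBound (hν2 : (∫⁻ e, ENNReal.ofReal (min 1 (e ^ 2)) ∂ν) < ⊤)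
    (hu : Measurable u) (hu2 : Integrable (fun e => u e ^ 2) ν) (hηint : Integrable η ν)
    {n : ℕ} (hn : 1 ≤ n) (P : ℝ) : Integrable (truncPenBound lam n P u η) ν := by
  have hA := (measure_lt_abs_lt_top hν2 (δ := 1 / (n : ℝ)) (by positivity)).ne
  have := isFiniteMeasure_restrict.2 hA
  exact ((integrable_indicator_iff (measurableSet_lt measurable_const measurable_abs)).2
    ((integrable_const _).add ((integrable_of_integrable_sq hA hu.aestronglyMeasurable hu2).abs.add
      (hηint.restrict.abs.const_mul P)))).add (hηint.abs.const_mul P)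

end LevyMeasure

lemma bddBelow_range_Icc_of_neg_mul_le {a b c : ℝ} {f : ℝ → ℝ} (h : ∀ p, -(p * c) ≤ f p) :
    BddBelow (range fun p : Icc a b => f p) := by
  refine ⟨-(max |a| |b| * |c|), ?_⟩
  rintro _ ⟨p, rfl⟩
  have hp := abs_le_max_abs_abs p.2.1 p.2.2
  have : |(p : ℝ) * c| ≤ max |a| |b| * |c| := by rw [abs_mul]; gcongr
  show _ ≤ f p
  linarith [le_abs_self ((p : ℝ) * c), h p]

section NoSignalPart

variable {ν : Measure ℝ} {η γ u : ℝ → ℝ} {lam Cke : ℝ}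

lemma integrableOn_f1m_integrand (hν2 : (∫⁻ e, ENNReal.ofReal (min 1 (e ^ 2)) ∂ν) < ⊤)
    (hlam : 0 < lam) (hu : Measurable u) (hη : Measurable η)
    (hu2 : Integrable (fun e => u e ^ 2) ν) (hηint : Integrable η ν) {k : ℕ} (hk : 1 ≤ k)
    (j : ℕ) (p : ℝ) :
    IntegrableOn (fun e => hpen lam (phim j (u e - p * η e))) {e | γ e = 0} (numeas ν k) := by
  rw [numeas_eq]
  exact (integrableOn_hpen_phim hlam hu hη hu2 hηint
    (measure_lt_abs_lt_top hν2 (by positivity)).ne j p).integrableOn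

lemma neg_mul_integral_le_f1m (hlam : 0 < lam) (m : ℕ) (z p : ℝ) :
    -(p * ∫ e in {e | γ e = 0}, η e ∂ν) ≤ f1m ν η γ lam Cke m z u p := by
  have h₁ : 0 ≤ lam / 2 * (p - (z + Cke / lam)) ^ 2 * rhom m z := by
    have := rhom_nonneg m z; positivity
  have h₂ : 0 ≤ ∫ e in {e | γ e = 0}, hpen lam (phim m (u e - p * η e)) ∂(numeas ν m) :=
    integral_nonneg fun e => hpen_nonneg hlam _
  unfold f1m
  linarith

lemma f1m_le_f1m_succ (hν2 : (∫⁻ e, ENNReal.ofReal (min 1 (e ^ 2)) ∂ν) < ⊤) (hlam : 0 < lam)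
    (hu : Measurable u) (hη : Measurable η) (hu2 : Integrable (fun e => u e ^ 2) ν)
    (hηint : Integrable η ν) {m : ℕ} (hm : 1 ≤ m) (z p : ℝ) :
    f1m ν η γ lam Cke m z u p ≤ f1m ν η γ lam Cke (m + 1) z u p := by
  have hint := fun k (hk : 1 ≤ k) =>
    integrableOn_f1m_integrand (γ := γ) hν2 hlam hu hη hu2 hηint hk
  have hρ : lam / 2 * (p - (z + Cke / lam)) ^ 2 * rhom m z
      ≤ lam / 2 * (p - (z + Cke / lam)) ^ 2 * rhom (m + 1) z := by
    gcongr; exact rhom_le_rhom_succ m z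
  have hpen : ∫ e in {e | γ e = 0}, hpen lam (phim m (u e - p * η e)) ∂(numeas ν m)
      ≤ ∫ e in {e | γ e = 0}, hpen lam (phim (m + 1) (u e - p * η e)) ∂(numeas ν (m + 1)) :=
    calc _ ≤ ∫ e in {e | γ e = 0}, hpen lam (phim (m + 1) (u e - p * η e)) ∂(numeas ν m) :=
          integral_mono (hint m hm m p) (hint m hm (m + 1) p)
            fun e => hpen_phim_le_hpen_phim_succ hlam m _
      _ ≤ _ := integral_mono_measure (Measure.restrict_mono subset_rfl (numeas_le_numeas_succ hm))
          (ae_of_all _ fun e => hpen_nonneg hlam _) (hint (m + 1) (by omega) (m + 1) p)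
  unfold f1m
  linarith

end NoSignalPart

section SignalPart

variable {ν μ : Measure ℝ} {η γ u : ℝ → ℝ} {K : ℝ → Measure ℝ} {lam : ℝ}

lemma restrict_ne_zero_eq_bind (hK : Measurable K)
    (hdis : ∀ B : Set ℝ, MeasurableSet B →
      ν (B ∩ {e | γ e ≠ 0}) = ∫⁻ g in ({0}ᶜ : Set ℝ), K g B ∂μ) :
    ν.restrict {e | γ e ≠ 0} = (μ.restrict ({0}ᶜ : Set ℝ)).bind K := by
  ext B hB
  rw [Measure.restrict_apply hB, Measure.bind_apply hB hK.aemeasurable, hdis B hB]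

lemma ae_restrict_kernel_eq (hγ : Measurable γ)
    (hKprob : ∀ᵐ g ∂μ.restrict ({0}ᶜ : Set ℝ), K g Set.univ = 1 ∧ K g {e | γ e = g} = 1) :
    ∀ᵐ g ∂μ.restrict ({0}ᶜ : Set ℝ), (K g).restrict {e | γ e = g} = K g := by
  filter_upwards [hKprob] with g ⟨huniv, hfib⟩
  have : IsFiniteMeasure (K g) := ⟨by simp [huniv]⟩
  rw [Measure.restrict_congr_set ((ae_eq_univ_iff_measure_eq
    (measurableSet_eq_fun hγ measurable_const).nullMeasurableSet).2 (hfib.trans huniv.symm)),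
    Measure.restrict_univ]

lemma neg_mul_integral_le_f2m (hlam : 0 < lam) (m : ℕ) (g p : ℝ) :
    -(p * ∫ e in {e | γ e = g}, η e ∂(K g)) ≤ f2m η γ K lam m g u p := by
  have : 0 ≤ ∫ e in {e | γ e = g}, truncPen lam m u η p e ∂(K g) :=
    integral_nonneg (truncPen_nonneg hlam m p)
  unfold f2m
  unfold truncPen at this
  linarith

lemma f2m_eq_integral {g p : ℝ} {m : ℕ} (hr : (K g).restrict {e | γ e = g} = K g)
    (htp : Integrable (truncPen lam m u η p) (K g)) (hη : Integrable η (K g)) :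
    f2m η γ K lam m g u p = ∫ e, (truncPen lam m u η p e - p * η e) ∂(K g) := by
  rw [integral_sub htp (hη.const_mul p), integral_const_mul]
  change (∫ e, truncPen lam m u η p e ∂((K g).restrict _))
    - p * ∫ e, η e ∂((K g).restrict _) = _
  rw [hr]

lemma ae_f2m_eq_integral (hν2 : (∫⁻ e, ENNReal.ofReal (min 1 (e ^ 2)) ∂ν) < ⊤)
    (hη : Measurable η) (hηint : Integrable η ν) (hK : Measurable K)
    (hbind : ν.restrict {e | γ e ≠ 0} = (μ.restrict ({0}ᶜ : Set ℝ)).bind K)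
    (hfib : ∀ᵐ g ∂μ.restrict ({0}ᶜ : Set ℝ), (K g).restrict {e | γ e = g} = K g)
    (hlam : 0 < lam) (hu : Measurable u) (hu2 : Integrable (fun e => u e ^ 2) ν)
    {n : ℕ} (hn : 1 ≤ n) (P : ℝ) :
    ∀ᵐ g ∂μ.restrict ({0}ᶜ : Set ℝ), ∀ k, 1 ≤ k → k ≤ n → ∀ p, |p| ≤ P →
      Integrable (fun e => truncPen lam k u η p e - p * η e) (K g) ∧
      f2m η γ K lam k g u p = ∫ e, (truncPen lam k u η p e - p * η e) ∂(K g) := by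
  have hW := ae_integrable_of_integrable_bind hK (measurable_truncPenBound hu hη n P)
    (hbind ▸ (integrable_truncPenBound (lam := lam) hν2 hu hu2 hηint hn P).restrict)
  have hηK := ae_integrable_of_integrable_bind hK hη (hbind ▸ hηint.restrict)
  filter_upwards [hfib, hW, hηK] with g hr hWg hηg k hk hkn p hp
  have htp : Integrable (truncPen lam k u η p) (K g) :=
    hWg.mono' (measurable_truncPen hu hη k p).aestronglyMeasurable (ae_of_all _ fun e => by
      rw [Real.norm_eq_abs, abs_of_nonneg (truncPen_nonneg hlam k p e)]
      linarith [truncPen_le_truncPenBound (u := u) (η := η) hlam hk hkn hp e, abs_nonneg (p * η e)])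
  exact ⟨htp.sub (hηg.const_mul p), f2m_eq_integral hr htp hηg⟩

lemma integrableOn_iInf_f2m (hν2 : (∫⁻ e, ENNReal.ofReal (min 1 (e ^ 2)) ∂ν) < ⊤)
    (hη : Measurable η) (hηint : Integrable η ν) (hK : Measurable K)
    (hbind : ν.restrict {e | γ e ≠ 0} = (μ.restrict ({0}ᶜ : Set ℝ)).bind K)
    (hfib : ∀ᵐ g ∂μ.restrict ({0}ᶜ : Set ℝ), (K g).restrict {e | γ e = g} = K g)
    (hlam : 0 < lam) (hu : Measurable u) (hu2 : Integrable (fun e => u e ^ 2) ν)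
    {a b : ℝ} (hab : a ≤ b) {k : ℕ} (hk : 1 ≤ k) :
    IntegrableOn (fun g => ⨅ p : Icc a b, f2m η γ K lam k g u p) ({0}ᶜ : Set ℝ) μ := by
  have : Nonempty (Icc a b) := (nonempty_Icc.2 hab).to_subtype
  have hP (p : Icc a b) : |(p : ℝ)| ≤ max |a| |b| := abs_le_max_abs_abs p.2.1 p.2.2
  have hInf := integrable_iInf_integral (X := Icc a b) hK
    (F := fun p e => truncPen lam k u η p e - p * η e)
    (fun p => (measurable_truncPen hu hη k p).sub (hη.const_mul p))
    (fun e => ((continuous_truncPen_param k e).comp continuous_subtype_val).sub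
      (continuous_subtype_val.mul continuous_const))
    (measurable_truncPenBound hu hη k _) (fun p e => abs_truncPen_sub_le hlam hk le_rfl (hP p) e)
    (hbind ▸ (integrable_truncPenBound (lam := lam) hν2 hu hu2 hηint hk _).restrict)
  refine hInf.congr ?_
  filter_upwards [ae_f2m_eq_integral hν2 hη hηint hK hbind hfib hlam hu hu2 hk
    (max |a| |b|)] with g hg
  exact iInf_congr fun p => (hg k hk le_rfl p (hP p)).2.symm

lemma ae_iInf_f2m_le_iInf_f2m_succ (hν2 : (∫⁻ e, ENNReal.ofReal (min 1 (e ^ 2)) ∂ν) < ⊤)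
    (hη : Measurable η) (hηint : Integrable η ν) (hK : Measurable K)
    (hbind : ν.restrict {e | γ e ≠ 0} = (μ.restrict ({0}ᶜ : Set ℝ)).bind K)
    (hfib : ∀ᵐ g ∂μ.restrict ({0}ᶜ : Set ℝ), (K g).restrict {e | γ e = g} = K g)
    (hlam : 0 < lam) (hu : Measurable u) (hu2 : Integrable (fun e => u e ^ 2) ν)
    (a b : ℝ) {m : ℕ} (hm : 1 ≤ m) :
    ∀ᵐ g ∂μ.restrict ({0}ᶜ : Set ℝ), ⨅ p : Icc a b, f2m η γ K lam m g u p
      ≤ ⨅ p : Icc a b, f2m η γ K lam (m + 1) g u p := by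
  filter_upwards [ae_f2m_eq_integral hν2 hη hηint hK hbind hfib hlam hu hu2
    (n := m + 1) (by omega) (max |a| |b|)] with g hg
  refine ciInf_mono (bddBelow_range_Icc_of_neg_mul_le fun p => neg_mul_integral_le_f2m hlam m g p)
    fun p => ?_
  have hP := abs_le_max_abs_abs p.2.1 p.2.2
  obtain ⟨hi, he⟩ := hg m hm (by omega) p hP
  obtain ⟨hi', he'⟩ := hg (m + 1) (by omega) le_rfl p hP
  rw [he, he']
  exact integral_mono hi hi' fun e => sub_le_sub_right (truncPen_le_truncPen_succ hlam hm p e) _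

end SignalPart

end Driver

open Driver in
theorem fm_monotone_general
    (ν : Measure ℝ)
    (hν2 : (∫⁻ e, ENNReal.ofReal (min 1 (e ^ 2)) ∂ν) < ⊤)
    (η γ : ℝ → ℝ) (hηmeas : Measurable η) (hγmeas : Measurable γ)
    (hηint : Integrable η ν)
    (μ : Measure ℝ)
    (K : ℝ → Measure ℝ) (hKmeas : Measurable K)
    (hKprob : ∀ᵐ g ∂μ.restrict ({0}ᶜ : Set ℝ),
      K g Set.univ = 1 ∧ K g {e | γ e = g} = 1)
    (hdis : ∀ B : Set ℝ, MeasurableSet B →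
      ν (B ∩ {e | γ e ≠ 0}) = ∫⁻ g in ({0}ᶜ : Set ℝ), K g B ∂μ)
    (lam pil pib : ℝ) (hlam : 0 < lam) (hpil : 0 < pil) (hpib : 0 < pib)
    (Cke : ℝ)
    (m : ℕ) (hm : 1 ≤ m)
    (z : ℝ) (u : ℝ → ℝ) (humeas : Measurable u)
    (hu2 : Integrable (fun e => (u e) ^ 2) ν) :
    (∀ k, k = m ∨ k = m + 1 →
      (∀ p ∈ Set.Icc (-pil) pib,
        IntegrableOn (fun e => hpen lam (phim k (u e - p * η e)))
          {e | γ e = 0} (numeas ν k)) ∧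
      IntegrableOn (fun g => ⨅ p : Set.Icc (-pil) pib, f2m η γ K lam k g u p)
        ({0}ᶜ : Set ℝ) μ) ∧
    fm ν μ η γ K lam Cke pil pib m z u ≤ fm ν μ η γ K lam Cke pil pib (m + 1) z u := by
  have hab : -pil ≤ pib := by linarith
  have hbind := restrict_ne_zero_eq_bind hKmeas hdis
  have hfib := ae_restrict_kernel_eq hγmeas hKprob
  have hf2int {k : ℕ} (hk : 1 ≤ k) :=
    integrableOn_iInf_f2m hν2 hηmeas hηint hKmeas hbind hfib hlam humeas hu2 hab hk
  refine ⟨fun k hk => ?_, ?_⟩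
  · have hk : 1 ≤ k := by omega
    exact ⟨fun p _ => integrableOn_f1m_integrand hν2 hlam humeas hηmeas hu2 hηint hk k p, hf2int hk⟩
  · have hf1 : ⨅ p : Icc (-pil) pib, f1m ν η γ lam Cke m z u p
        ≤ ⨅ p : Icc (-pil) pib, f1m ν η γ lam Cke (m + 1) z u p :=
      ciInf_mono (bddBelow_range_Icc_of_neg_mul_le fun p => neg_mul_integral_le_f1m hlam m z p)
        fun p => f1m_le_f1m_succ hν2 hlam humeas hηmeas hu2 hηint hm z p
    have hf2 := integral_mono_ae (hf2int hm) (hf2int (by omega : 1 ≤ m + 1))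
      (ae_iInf_f2m_le_iInf_f2m_succ hν2 hηmeas hηint hKmeas hbind hfib hlam humeas hu2
        (-pil) pib hm)
    unfold fm
    linarith

/-- **Monotonicity of the approximating drivers**: for every `m ≥ 1`, `z ∈ ℝ` and Borel `u`
with `∫ u² dν < ∞`, the quantities `f_m(z,u)` and `f_{m+1}(z,u)` are well defined and
`f_m(z,u) ≤ f_{m+1}(z,u)`. -/
theorem fm_monotone
    (ν : Measure ℝ) [SigmaFinite ν]
    (hν0 : ν {0} = 0)
    (hν2 : (∫⁻ e, ENNReal.ofReal (min 1 (e ^ 2)) ∂ν) < ⊤)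
    (η γ : ℝ → ℝ) (hηmeas : Measurable η) (hγmeas : Measurable γ)
    (C₀ : ℝ) (hC₀ : 0 < C₀)
    (hηb : ∀ e, |η e| ≤ C₀ * min 1 |e|)
    (hγb : ∀ e, |γ e| ≤ C₀ * min 1 |e|)
    (hηint : Integrable η ν)
    (μ : Measure ℝ)
    (hμ : ∀ B : Set ℝ, MeasurableSet B → μ B = ν (γ ⁻¹' (B \ {0})))
    (K : ℝ → Measure ℝ) (hKmeas : Measurable K)
    (hKprob : ∀ᵐ g ∂μ.restrict ({0}ᶜ : Set ℝ),
      K g Set.univ = 1 ∧ K g {e | γ e = g} = 1)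
    (hdis : ∀ B : Set ℝ, MeasurableSet B →
      ν (B ∩ {e | γ e ≠ 0}) = ∫⁻ g in ({0}ᶜ : Set ℝ), K g B ∂μ)
    (lam pil pib : ℝ) (hlam : 0 < lam) (hpil : 0 < pil) (hpib : 0 < pib)
    (Cke : ℝ)
    (m : ℕ) (hm : 1 ≤ m)
    (z : ℝ) (u : ℝ → ℝ) (humeas : Measurable u)
    (hu2 : Integrable (fun e => (u e) ^ 2) ν) :
    (∀ k, k = m ∨ k = m + 1 →
      (∀ p ∈ Set.Icc (-pil) pib,
        IntegrableOn (fun e => hpen lam (phim k (u e - p * η e)))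
          {e | γ e = 0} (numeas ν k)) ∧
      IntegrableOn (fun g => ⨅ p : Set.Icc (-pil) pib, f2m η γ K lam k g u p)
        ({0}ᶜ : Set ℝ) μ) ∧
    fm ν μ η γ K lam Cke pil pib m z u ≤ fm ν μ η γ K lam Cke pil pib (m + 1) z u :=
  fm_monotone_general ν hν2 η γ hηmeas hγmeas hηint μ K hKmeas hKprob hdis lam pil pib hlam hpil
    hpib Cke m hm z u humeas hu2
end
end

section
/- Lipschitz continuity of the approximating drivers: For every integer m ≥ 1 there exists a constant L_m > 0 such that |f_m(z,u) − f_m(z',u')| ≤ L_m ( |z − z'| + (∫ (u − u')² dν)^{1/2} ) for all z, z' ∈ ℝ and all Borel functions u, u' : ℝ → ℝ with ∫ u² dν < ∞ and ∫ (u')² dν < ∞. -/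
open MeasureTheory Set

noncomputable section

/-!
Each part of `f_m` is an infimum, over the compact interval of weights `p`, of functions that are
Lipschitz in `(z, u)` uniformly in `p`, and an infimum of uniformly Lipschitz functions is
Lipschitz. The penalty `h_λ ∘ φ_m` is globally Lipschitz because `φ_m` is 1-Lipschitz and bounded
above by `m + 2`; the quadratic term is Lipschitz in `z` because `ρ_m` cuts it off outside
`[-(m+1), m+1]`. The dependence on `u` is then through `∫ |u - u'|` over `{|e| > 1/m}`, a set of
finite `ν`-measure, so Cauchy–Schwarz gives the `L²(ν)` bound; in the signal part this integral
is first disintegrated along `K`. The fibrewise infimum is continuous in `p`, hence a countable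
infimum, which makes it measurable in the signal `g`.
-/

open scoped NNReal ENNReal

lemma Real.lipschitzWith_arctan : LipschitzWith 1 Real.arctan := by
  refine lipschitzWith_of_nnnorm_deriv_le Real.differentiable_arctan fun x => ?_
  rw [Real.deriv_arctan, ← NNReal.coe_le_coe, coe_nnnorm, Real.norm_eq_abs, NNReal.coe_one,
    abs_of_pos (by positivity), div_le_one (by positivity)]
  nlinarith [sq_nonneg x]

lemma phi0_eq_min (x : ℝ) : phi0 x = min x (Real.arctan x) := by
  have h := abs_le.1 (by simpa using Real.lipschitzWith_arctan.dist_le_mul x 0 :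
    |Real.arctan x| ≤ |x|)
  unfold phi0
  split_ifs with hx
  · rw [abs_of_pos hx] at h; exact (min_eq_right h.2).symm
  · rw [abs_of_nonpos (not_lt.1 hx)] at h; exact (min_eq_left (by linarith [h.1])).symm

lemma lipschitzWith_phim (m : ℕ) : LipschitzWith 1 (phim m) := by
  have h0 : LipschitzWith 1 phi0 := by
    simpa [funext phi0_eq_min] using LipschitzWith.id.min Real.lipschitzWith_arctan
  have h := (IsometryEquiv.addRight (m : ℝ)).isometry.lipschitz.comp
    (h0.comp (IsometryEquiv.subRight (m : ℝ)).isometry.lipschitz)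
  rwa [mul_one, mul_one] at h

lemma phim_le (m : ℕ) (x : ℝ) : phim m x ≤ m + 2 := by
  have := (min_le_right (x - m) _).trans (Real.arctan_lt_pi_div_two (x - m)).le
  rw [phim, phi0_eq_min]
  linarith [Real.pi_le_four]

lemma phim_zero (m : ℕ) : phim m 0 = 0 := by
  simp [phim, phi0, (Nat.cast_nonneg (α := ℝ) m).not_gt]

lemma hpen_zero (lam : ℝ) : hpen lam 0 = 0 := by
  simp [hpen]

lemma hasDerivAt_hpen {lam : ℝ} (hlam : lam ≠ 0) (x : ℝ) :
    HasDerivAt (hpen lam) (Real.exp (lam * x) - 1) x := by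
  have h := ((((hasDerivAt_id x).const_mul lam).exp.sub ((hasDerivAt_id x).const_mul lam)).sub_const
    1).div_const lam
  exact h.congr_deriv (by simp only [id, mul_one]; field_simp)

lemma lipschitzOnWith_hpen {lam b : ℝ} (hlam : 0 < lam) (hb : 0 ≤ b) :
    LipschitzOnWith (Real.exp (lam * b)).toNNReal (hpen lam) (Iic b) := by
  refine (convex_Iic b).lipschitzOnWith_of_nnnorm_hasDerivWithin_le
    (fun x _ => (hasDerivAt_hpen hlam.ne' x).hasDerivWithinAt) fun x hx => ?_
  have : Real.exp (lam * x) ≤ Real.exp (lam * b) :=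
    Real.exp_le_exp.2 (mul_le_mul_of_nonneg_left hx hlam.le)
  rw [← NNReal.coe_le_coe, coe_nnnorm, Real.norm_eq_abs, Real.coe_toNNReal _ (Real.exp_pos _).le,
    abs_le]
  constructor <;> linarith [Real.exp_pos (lam * x), Real.one_le_exp (mul_nonneg hlam.le hb)]

lemma lipschitzWith_hpen_phim {lam : ℝ} (hlam : 0 < lam) (m : ℕ) :
    LipschitzWith (Real.exp (lam * (m + 2))).toNNReal fun x => hpen lam (phim m x) := by
  have h := (lipschitzOnWith_hpen hlam (by positivity)).comp
    (lipschitzWith_phim m).lipschitzOnWith (s := univ) fun x _ => phim_le m x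
  rwa [mul_one, lipschitzOnWith_univ] at h

lemma rhom_eq_max_min (m : ℕ) (x : ℝ) :
    rhom m x = max 0 (min 1 (min (x + m + 1) (m + 1 - x))) := by
  have hm : (0 : ℝ) ≤ m := m.cast_nonneg
  unfold rhom
  simp only [max_def, min_def]
  split_ifs <;> grind

lemma lipschitzWith_rhom (m : ℕ) : LipschitzWith 1 (rhom m) := by
  have h : LipschitzWith 1 fun x : ℝ => min (x + m + 1) (m + 1 - x) := by
    simpa [add_assoc] using (IsometryEquiv.addRight (m + 1 : ℝ)).isometry.lipschitz.min
      (IsometryEquiv.subLeft (m + 1 : ℝ)).isometry.lipschitz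
  simpa [funext (rhom_eq_max_min m), add_assoc] using (h.const_min 1).const_max 0

lemma rhom_mem_Icc (m : ℕ) (x : ℝ) : rhom m x ∈ Icc 0 1 := by
  rw [rhom_eq_max_min]
  exact ⟨le_max_left _ _, max_le zero_le_one (min_le_left _ _)⟩

lemma rhom_eq_zero {m : ℕ} {x : ℝ} (hx : x ∉ Ioo (-(m + 1 : ℝ)) (m + 1)) : rhom m x = 0 := by
  have hm : (0 : ℝ) ≤ m := m.cast_nonneg
  rw [mem_Ioo, not_and_or, not_lt, not_lt] at hx
  unfold rhom
  split_ifs <;> grind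

lemma abs_mul_rhom_sub_mul_rhom_le {m : ℕ} {f : ℝ → ℝ} {M L : ℝ}
    (hM : ∀ x ∈ Icc (-(m + 1 : ℝ)) (m + 1), |f x| ≤ M)
    (hL0 : 0 ≤ L) (hL : ∀ x ∈ Icc (-(m + 1 : ℝ)) (m + 1), ∀ y ∈ Icc (-(m + 1 : ℝ)) (m + 1),
      |f x - f y| ≤ L * |x - y|)
    (z z' : ℝ) : |f z * rhom m z - f z' * rhom m z'| ≤ (M + L) * |z - z'| := by
  have hI : -(m + 1 : ℝ) ≤ m + 1 := by linarith [m.cast_nonneg (α := ℝ)]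
  -- `rhom m` vanishes outside the interval, so `f` only matters on it
  have hclamp : ∀ x, f x * rhom m x = f (projIcc _ _ hI x) * rhom m (projIcc _ _ hI x) := by
    intro x
    by_cases hx : x ∈ Ioo (-(m + 1 : ℝ)) (m + 1)
    · rw [projIcc_of_mem hI (Ioo_subset_Icc_self hx)]
    · have hp : (projIcc _ _ hI x : ℝ) ∉ Ioo (-(m + 1 : ℝ)) (m + 1) := by
        rcases le_or_gt x (-(m + 1)) with h | h
        · simp [projIcc_of_le_left hI h]
        · simp [projIcc_of_right_le hI (not_lt.1 fun h' => hx ⟨h, h'⟩)]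
      rw [rhom_eq_zero hx, rhom_eq_zero hp, mul_zero, mul_zero]
  rw [hclamp z, hclamp z']
  set a := projIcc _ _ hI z
  set b := projIcc _ _ hI z'
  have hab : |(a : ℝ) - b| ≤ |z - z'| := by
    simpa [Subtype.dist_eq, Real.dist_eq] using (LipschitzWith.projIcc hI).dist_le_mul z z'
  have hρ : |rhom m a - rhom m b| ≤ |(a : ℝ) - b| := by
    simpa [Real.dist_eq] using (lipschitzWith_rhom m).dist_le_mul a b
  have hρb : |rhom m b| ≤ 1 := abs_le.2 ⟨by linarith [(rhom_mem_Icc m b).1], (rhom_mem_Icc m b).2⟩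
  have hM0 : 0 ≤ M := (abs_nonneg _).trans (hM a a.2)
  calc |f a * rhom m a - f b * rhom m b|
      = |f a * (rhom m a - rhom m b) + (f a - f b) * rhom m b| := by ring_nf
    _ ≤ M * |(a : ℝ) - b| + L * |(a : ℝ) - b| * 1 := by
      refine (abs_add_le _ _).trans (add_le_add ?_ ?_) <;> rw [abs_mul]
      · exact mul_le_mul (hM a a.2) hρ (abs_nonneg _) hM0
      · exact mul_le_mul (hL a a.2 b b.2) hρb (abs_nonneg _) (mul_nonneg hL0 (abs_nonneg _))
    _ ≤ (M + L) * |z - z'| := by rw [mul_one, ← add_mul]; gcongr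

lemma abs_sq_mul_rhom_sub_le (m : ℕ) (p c z z' : ℝ) :
    |(p - (z + c)) ^ 2 * rhom m z - (p - (z' + c)) ^ 2 * rhom m z'|
      ≤ ((|p| + (m + 1) + |c|) ^ 2 + 2 * (|p| + (m + 1) + |c|)) * |z - z'| := by
  set Q := |p| + (m + 1) + |c|
  have hQ : ∀ x ∈ Icc (-(m + 1 : ℝ)) (m + 1), |p - (x + c)| ≤ Q := fun x hx => by
    have := abs_le.2 hx
    calc |p - (x + c)| ≤ |p| + (|x| + |c|) := (abs_sub _ _).trans (by gcongr; exact abs_add_le _ _)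
      _ ≤ Q := by simp only [Q]; linarith
  refine abs_mul_rhom_sub_mul_rhom_le (f := fun x => (p - (x + c)) ^ 2) (fun x hx => ?_)
    (by positivity) (fun x hx y hy => ?_) z z'
  · rw [abs_pow]; exact pow_le_pow_left₀ (abs_nonneg _) (hQ x hx) 2
  · rw [show (p - (x + c)) ^ 2 - (p - (y + c)) ^ 2
        = ((p - (x + c)) + (p - (y + c))) * (y - x) by ring, abs_mul, abs_sub_comm y x]
    gcongr
    exact (abs_add_le _ _).trans (by linarith [hQ x hx, hQ y hy])

section Infimum

variable {ι : Type*} [Nonempty ι]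

lemma abs_ciInf_sub_ciInf_le {A B : ι → ℝ} {c : ℝ} (hA : BddBelow (range A))
    (h : ∀ i, |A i - B i| ≤ c) : |(⨅ i, A i) - ⨅ i, B i| ≤ c := by
  obtain ⟨a, ha⟩ := hA
  have hB : BddBelow (range B) := ⟨a - c, by
    rintro _ ⟨i, rfl⟩
    linarith [ha ⟨i, rfl⟩, (abs_le.1 (h i)).2]⟩
  have h₁ : (⨅ i, A i) - c ≤ ⨅ i, B i := le_ciInf fun i => by
    linarith [ciInf_le ⟨a, ha⟩ i, (abs_le.1 (h i)).2]
  have h₂ : (⨅ i, B i) - c ≤ ⨅ i, A i := le_ciInf fun i => by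
    linarith [ciInf_le hB i, (abs_le.1 (h i)).1]
  exact abs_sub_le_iff.2 ⟨by linarith, by linarith⟩

lemma abs_ciInf_le {A : ι → ℝ} {c : ℝ} (h : ∀ i, |A i| ≤ c) : |⨅ i, A i| ≤ c := by
  have hA : BddBelow (range A) := ⟨-c, by rintro _ ⟨i, rfl⟩; exact (abs_le.1 (h i)).1⟩
  simpa using abs_ciInf_sub_ciInf_le (B := fun _ => 0) hA (by simpa using h)

lemma ciInf_eq_ciInf_comp_of_denseRange {X : Type*} [TopologicalSpace X] {d : ι → X}
    (hd : DenseRange d) {A : X → ℝ} (hA : Continuous A) (hbdd : BddBelow (range A)) :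
    ⨅ x, A x = ⨅ i, A (d i) := by
  have : Nonempty X := ⟨d (Classical.arbitrary ι)⟩
  refine le_antisymm (le_ciInf fun i => ciInf_le hbdd (d i)) (le_ciInf fun x => ?_)
  exact hd.induction_on x (isClosed_le continuous_const hA)
    fun i => ciInf_le (hbdd.mono (range_comp_subset_range d A)) i

end Infimum

section PenaltyIntegral

variable {α : Type*} [MeasurableSpace α] {ρ : Measure α}

lemma abs_integral_sub_integral_le {f g b : α → ℝ} (hf : Integrable f ρ) (hg : Integrable g ρ)
    (hb : Integrable b ρ) (h : ∀ᵐ x ∂ρ, |f x - g x| ≤ b x) :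
    |∫ x, f x ∂ρ - ∫ x, g x ∂ρ| ≤ ∫ x, b x ∂ρ := by
  rw [← integral_sub hf hg]
  exact abs_integral_le_integral_abs.trans (integral_mono_ae (hf.sub hg).abs hb h)

variable {H : ℝ → ℝ} {L : ℝ≥0} {u u' η : α → ℝ}

lemma LipschitzWith.abs_sub_le (hH : LipschitzWith L H) (x y : ℝ) : |H x - H y| ≤ L * |x - y| := by
  simpa [Real.dist_eq] using hH.dist_le_mul x y

lemma LipschitzWith.abs_le_mul_abs (hH : LipschitzWith L H) (hH0 : H 0 = 0) (x : ℝ) :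
    |H x| ≤ L * |x| := by
  simpa [hH0] using hH.abs_sub_le x 0

lemma LipschitzWith.integrable_comp_sub_mul (hH : LipschitzWith L H) (hH0 : H 0 = 0)
    (hu : Integrable u ρ) (hη : Integrable η ρ) (p : ℝ) :
    Integrable (fun x => H (u x - p * η x)) ρ :=
  memLp_one_iff_integrable.1 <| hH.comp_memLp hH0 <|
    memLp_one_iff_integrable.2 (hu.sub (hη.const_mul p))

lemma LipschitzWith.abs_integral_comp_sub_mul_le (hH : LipschitzWith L H) (hH0 : H 0 = 0)
    (hu : Integrable u ρ) (hη : Integrable η ρ) (p : ℝ) :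
    |∫ x, H (u x - p * η x) ∂ρ| ≤ L * (∫ x, |u x| ∂ρ + |p| * ∫ x, |η x| ∂ρ) := by
  calc _ ≤ ∫ x, |H (u x - p * η x)| ∂ρ := abs_integral_le_integral_abs
    _ ≤ ∫ x, L * (|u x| + |p| * |η x|) ∂ρ := by
      refine integral_mono (hH.integrable_comp_sub_mul hH0 hu hη p).abs
        ((hu.abs.add (hη.abs.const_mul _)).const_mul _) fun x => ?_
      exact (hH.abs_le_mul_abs hH0 _).trans (mul_le_mul_of_nonneg_left
        ((abs_sub _ _).trans_eq (by rw [abs_mul])) L.coe_nonneg)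
    _ = _ := by
      rw [integral_const_mul, integral_add hu.abs (hη.abs.const_mul _), integral_const_mul]

lemma LipschitzWith.abs_integral_comp_sub_mul_sub_le (hH : LipschitzWith L H) (hH0 : H 0 = 0)
    (hu : Integrable u ρ) (hu' : Integrable u' ρ) (hη : Integrable η ρ) (p : ℝ) :
    |∫ x, H (u x - p * η x) ∂ρ - ∫ x, H (u' x - p * η x) ∂ρ| ≤ L * ∫ x, |u x - u' x| ∂ρ := by
  rw [← integral_const_mul]
  refine abs_integral_sub_integral_le (hH.integrable_comp_sub_mul hH0 hu hη p)
    (hH.integrable_comp_sub_mul hH0 hu' hη p) ((hu.sub hu').abs.const_mul L) <|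
    ae_of_all _ fun x => ?_
  simpa using hH.abs_sub_le (u x - p * η x) (u' x - p * η x)

lemma LipschitzWith.continuous_integral_comp_sub_mul (hH : LipschitzWith L H) (hH0 : H 0 = 0)
    (hu : Integrable u ρ) (hη : Integrable η ρ) :
    Continuous fun p => ∫ x, H (u x - p * η x) ∂ρ := by
  refine (LipschitzWith.of_dist_le' (K := L * ∫ x, |η x| ∂ρ) fun p q => ?_).continuous
  rw [Real.dist_eq, Real.dist_eq]
  calc _ ≤ ∫ x, L * (|η x| * |p - q|) ∂ρ :=
        abs_integral_sub_integral_le (hH.integrable_comp_sub_mul hH0 hu hη p)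
          (hH.integrable_comp_sub_mul hH0 hu hη q) ((hη.abs.mul_const _).const_mul L) <|
          ae_of_all _ fun x => by
        refine (hH.abs_sub_le _ _).trans_eq ?_
        rw [show u x - p * η x - (u x - q * η x) = (q - p) * η x by ring, abs_mul, abs_sub_comm]
        ring
    _ = L * (∫ x, |η x| ∂ρ) * |p - q| := by rw [integral_const_mul, integral_mul_const, mul_assoc]

end PenaltyIntegral

section IntegralBounds

variable {α β : Type*} [MeasurableSpace α] [MeasurableSpace β]

lemma integral_abs_le_sqrt_mul_sqrt {ρ : Measure α} [IsFiniteMeasure ρ] {w : α → ℝ}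
    (hw : MemLp w 2 ρ) : ∫ x, |w x| ∂ρ ≤ √(ρ.real univ) * √(∫ x, w x ^ 2 ∂ρ) := by
  have h := integral_mul_le_Lp_mul_Lq_of_nonneg (p := 2) (q := 2) Real.HolderConjugate.two_two
    (ae_of_all _ fun x => abs_nonneg (w x)) (ae_of_all _ fun _ => zero_le_one)
    (by rw [ENNReal.ofReal_ofNat]; exact hw.abs) (memLp_const (1 : ℝ))
  simpa [Real.sqrt_eq_rpow, mul_comm] using h

lemma integral_abs_le_sqrt_mul_sqrt_of_le_restrict {ρ ν : Measure α} {s : Set α}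
    (hρ : ρ ≤ ν.restrict s) (hs : ν s ≠ ∞) {w : α → ℝ} (hw : MemLp w 2 ν) :
    ∫ x, |w x| ∂ρ ≤ √(ν.real s) * √(∫ x, w x ^ 2 ∂ν) := by
  have hρs : ρ univ ≤ ν s := by simpa using Measure.le_iff'.1 hρ univ
  have : IsFiniteMeasure ρ := ⟨hρs.trans_lt hs.lt_top⟩
  have hρν : ρ ≤ ν := hρ.trans Measure.restrict_le_self
  have hw2 := (memLp_two_iff_integrable_sq hw.1).1 hw
  refine (integral_abs_le_sqrt_mul_sqrt (hw.mono_measure hρν)).trans ?_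
  exact mul_le_mul (Real.sqrt_le_sqrt (ENNReal.toReal_mono hs hρs))
    (Real.sqrt_le_sqrt (integral_mono_measure hρν (ae_of_all _ fun x => sq_nonneg (w x)) hw2))
    (Real.sqrt_nonneg _) (Real.sqrt_nonneg _)

lemma measure_compl_Icc_ne_top {ν : Measure ℝ}
    (hν : ∫⁻ e, ENNReal.ofReal (min 1 (e ^ 2)) ∂ν < ∞) {r : ℝ} (hr : 0 < r) (hr1 : r ≤ 1) :
    ν (Icc (-r) r)ᶜ ≠ ∞ := by
  have hsub : (Icc (-r) r)ᶜ ⊆ {e | ENNReal.ofReal (r ^ 2) ≤ ENNReal.ofReal (min 1 (e ^ 2))} := by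
    intro e he
    have : r < |e| := by simpa [← abs_le] using he
    exact ENNReal.ofReal_le_ofReal (le_min (by nlinarith) (by nlinarith [sq_abs e, abs_nonneg e]))
  have h := (mul_meas_ge_le_lintegral₀ (by fun_prop) (ENNReal.ofReal (r ^ 2))).trans_lt hν
  exact (measure_mono hsub).trans_lt
    (ENNReal.lt_top_of_mul_ne_top_right h.ne (by simp [hr.ne'])) |>.ne

lemma measurable_integral_of_measurable_measure {K : α → Measure β} (hK : Measurable K)
    {f : β → ℝ} (hf : Measurable f) : Measurable fun a => ∫ x, f x ∂K a :=
  (StronglyMeasurable.integral_kernel (κ := ⟨K, hK⟩) hf.stronglyMeasurable).measurable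

variable {μ : Measure α} {K : α → Measure β} {b : β → ℝ}

lemma lintegral_lintegral_ne_top_of_integrable_bind (hK : Measurable K) (hb : Measurable b)
    (hint : Integrable b (μ.bind K)) : ∫⁻ a, ∫⁻ x, ENNReal.ofReal (b x) ∂K a ∂μ ≠ ∞ := by
  rw [← Measure.lintegral_bind hK.aemeasurable hb.ennreal_ofReal.aemeasurable]
  exact hint.lintegral_lt_top.ne

lemma ae_integrable_of_integrable_bind (hK : Measurable K) (hb : Measurable b) (hb0 : 0 ≤ b)
    (hint : Integrable b (μ.bind K)) : ∀ᵐ a ∂μ, Integrable b (K a) := by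
  filter_upwards [ae_lt_top ((Measure.measurable_lintegral hb.ennreal_ofReal).comp hK)
    (lintegral_lintegral_ne_top_of_integrable_bind hK hb hint)] with a ha
  exact (lintegral_ofReal_ne_top_iff_integrable hb.aestronglyMeasurable (ae_of_all _ hb0)).1 ha.ne

lemma integrable_integral_of_integrable_bind (hK : Measurable K) (hb : Measurable b) (hb0 : 0 ≤ b)
    (hint : Integrable b (μ.bind K)) : Integrable (fun a => ∫ x, b x ∂K a) μ := by
  have h a : ∫ x, b x ∂K a = (∫⁻ x, ENNReal.ofReal (b x) ∂K a).toReal :=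
    integral_eq_lintegral_of_nonneg_ae (ae_of_all _ hb0) hb.aestronglyMeasurable
  simp_rw [h]
  exact integrable_toReal_of_lintegral_ne_top
    ((Measure.measurable_lintegral hb.ennreal_ofReal).comp hK).aemeasurable
    (lintegral_lintegral_ne_top_of_integrable_bind hK hb hint)

lemma integral_integral_eq_integral_bind (hK : Measurable K) (hb : Measurable b) (hb0 : 0 ≤ b)
    (hint : Integrable b (μ.bind K)) : ∫ a, ∫ x, b x ∂K a ∂μ = ∫ x, b x ∂μ.bind K := by
  have h (ρ : Measure β) : ∫ x, b x ∂ρ = (∫⁻ x, ENNReal.ofReal (b x) ∂ρ).toReal :=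
    integral_eq_lintegral_of_nonneg_ae (ae_of_all _ hb0) hb.aestronglyMeasurable
  have hN : Measurable fun a => ∫⁻ x, ENNReal.ofReal (b x) ∂K a :=
    (Measure.measurable_lintegral hb.ennreal_ofReal).comp hK
  simp_rw [h]
  rw [integral_toReal hN.aemeasurable
    (ae_lt_top hN (lintegral_lintegral_ne_top_of_integrable_bind hK hb hint)),
    Measure.lintegral_bind hK.aemeasurable hb.ennreal_ofReal.aemeasurable]

lemma ae_integrableOn_of_integrableOn_bind (hK : Measurable K) {s : Set β} (hs : MeasurableSet s)
    {f : β → ℝ} (hf : Measurable f) (hint : IntegrableOn f s (μ.bind K)) :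
    ∀ᵐ a ∂μ, IntegrableOn f s (K a) := by
  filter_upwards [ae_integrable_of_integrable_bind hK (hf.abs.indicator hs)
    (indicator_nonneg fun _ _ => abs_nonneg _) ((integrable_indicator_iff hs).2 hint.abs)] with a ha
  exact (integrable_norm_iff hf.aestronglyMeasurable.restrict).1
    ((integrable_indicator_iff hs).1 ha)

end IntegralBounds

def bigJumps (m : ℕ) : Set ℝ := (Icc (-(1 / (m : ℝ))) (1 / (m : ℝ)))ᶜ

lemma measurableSet_bigJumps (m : ℕ) : MeasurableSet (bigJumps m) :=
  measurableSet_Icc.compl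

lemma indicator_bigJumps_apply (m : ℕ) (f : ℝ → ℝ) (e : ℝ) :
    (bigJumps m).indicator f e = if 1 / (m : ℝ) < |e| then f e else 0 := by
  simp only [indicator_apply, bigJumps, mem_compl_iff, mem_Icc, ← abs_le, not_le]

lemma abs_le_max_abs_of_mem_Icc {a b : ℝ} (p : Icc (-a) b) : |(p : ℝ)| ≤ max |a| |b| := by
  simpa using abs_le_max_abs_abs p.2.1 p.2.2

section Driver

variable {ν μ : Measure ℝ} {η γ : ℝ → ℝ} {K : ℝ → Measure ℝ} {lam Cke pil pib : ℝ} {m : ℕ}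
  {L : ℝ≥0} {u u' : ℝ → ℝ}

lemma abs_iInf_f1m_sub_iInf_f1m_le [Nonempty (Icc (-pil) pib)]
    (hH : LipschitzWith L fun x => hpen lam (phim m x)) (hlam : 0 ≤ lam)
    (hu : Integrable u (numeas ν m)) (hu' : Integrable u' (numeas ν m)) (hη : Integrable η ν)
    (z z' : ℝ) :
    |(⨅ p : Icc (-pil) pib, f1m ν η γ lam Cke m z u p)
        - ⨅ p : Icc (-pil) pib, f1m ν η γ lam Cke m z' u' p|
      ≤ lam / 2 * ((max |pil| |pib| + (m + 1) + |Cke / lam|) ^ 2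
          + 2 * (max |pil| |pib| + (m + 1) + |Cke / lam|)) * |z - z'|
        + L * ∫ e in {e | γ e = 0}, |u e - u' e| ∂numeas ν m := by
  have hH0 : hpen lam (phim m 0) = 0 := by rw [phim_zero, hpen_zero]
  replace hu := hu.restrict (s := {e | γ e = 0})
  replace hu' := hu'.restrict (s := {e | γ e = 0})
  replace hη : Integrable η ((numeas ν m).restrict {e | γ e = 0}) := hη.restrict.restrict
  set c := ∫ e in {e | γ e = 0}, η e ∂ν
  set Mb := max |pil| |pib|
  refine abs_ciInf_sub_ciInf_le ⟨-(L * (∫ e in {e | γ e = 0}, |u e| ∂numeas ν m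
      + Mb * ∫ e in {e | γ e = 0}, |η e| ∂numeas ν m)) - Mb * |c|, ?_⟩ fun p => ?_
  · rintro _ ⟨p, rfl⟩
    have hp := abs_le_max_abs_of_mem_Icc p
    have hquad : 0 ≤ lam / 2 * ((p : ℝ) - (z + Cke / lam)) ^ 2 * rhom m z :=
      mul_nonneg (by positivity) (rhom_mem_Icc m z).1
    have hJ := (abs_le.1 ((hH.abs_integral_comp_sub_mul_le hH0 hu hη p).trans
      (show _ ≤ L * (∫ e in {e | γ e = 0}, |u e| ∂numeas ν m
        + Mb * ∫ e in {e | γ e = 0}, |η e| ∂numeas ν m) by gcongr))).1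
    have hc : |(p : ℝ) * c| ≤ Mb * |c| := by rw [abs_mul]; gcongr
    simp only [f1m]
    linarith [le_abs_self ((p : ℝ) * c)]
  · have hquad := abs_sq_mul_rhom_sub_le m p (Cke / lam) z z'
    have hJ := hH.abs_integral_comp_sub_mul_sub_le hH0 hu hu' hη p
    have hQ : (|(p : ℝ)| + (m + 1) + |Cke / lam|) ^ 2 + 2 * (|(p : ℝ)| + (m + 1) + |Cke / lam|)
        ≤ (Mb + (m + 1) + |Cke / lam|) ^ 2 + 2 * (Mb + (m + 1) + |Cke / lam|) := by
      have := abs_le_max_abs_of_mem_Icc p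
      gcongr
    simp only [f1m]
    rw [show ∀ A A' B B' C : ℝ, A + B - C - (A' + B' - C) = (A - A') + (B - B') by intros; ring,
      mul_assoc, mul_assoc, ← mul_sub]
    refine (abs_add_le _ _).trans (add_le_add ?_ hJ)
    rw [abs_mul, abs_of_nonneg (by positivity : 0 ≤ lam / 2), mul_assoc]
    exact mul_le_mul_of_nonneg_left (hquad.trans (by gcongr)) (by positivity)

lemma f2m_eq_of_restrict_eq {g : ℝ} (hK : (K g).restrict {e | γ e = g} = K g) (u : ℝ → ℝ)
    (p : ℝ) : f2m η γ K lam m g u p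
      = (∫ e in bigJumps m, hpen lam (phim m (u e - p * η e)) ∂K g) - p * ∫ e, η e ∂K g := by
  rw [f2m, hK, ← integral_indicator (measurableSet_bigJumps m)]
  simp only [indicator_bigJumps_apply]

section Fibre

variable {g : ℝ}

lemma abs_f2m_le (hH : LipschitzWith L fun x => hpen lam (phim m x))
    (hK : (K g).restrict {e | γ e = g} = K g) (hη : Integrable η (K g))
    (hu : IntegrableOn u (bigJumps m) (K g)) (p : Icc (-pil) pib) :
    |f2m η γ K lam m g u p| ≤ L * ∫ e in bigJumps m, |u e| ∂K g
      + (L + 1) * max |pil| |pib| * ∫ e, |η e| ∂K g := by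
  have hp := abs_le_max_abs_of_mem_Icc p
  have hJ := hH.abs_integral_comp_sub_mul_le (by rw [phim_zero, hpen_zero]) hu hη.integrableOn p
  have hηT : ∫ e in bigJumps m, |η e| ∂K g ≤ ∫ e, |η e| ∂K g :=
    setIntegral_le_integral hη.abs (ae_of_all _ fun _ => abs_nonneg _)
  rw [f2m_eq_of_restrict_eq hK]
  calc _ ≤ L * (∫ e in bigJumps m, |u e| ∂K g + |(p : ℝ)| * ∫ e in bigJumps m, |η e| ∂K g)
        + |(p : ℝ)| * ∫ e, |η e| ∂K g :=
      (abs_sub _ _).trans <| add_le_add hJ <| by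
        rw [abs_mul]; gcongr; exact abs_integral_le_integral_abs
    _ ≤ L * (∫ e in bigJumps m, |u e| ∂K g + max |pil| |pib| * ∫ e, |η e| ∂K g)
        + max |pil| |pib| * ∫ e, |η e| ∂K g := by gcongr
    _ = _ := by ring

lemma abs_f2m_sub_f2m_le (hH : LipschitzWith L fun x => hpen lam (phim m x))
    (hK : (K g).restrict {e | γ e = g} = K g) (hη : Integrable η (K g))
    (hu : IntegrableOn u (bigJumps m) (K g)) (hu' : IntegrableOn u' (bigJumps m) (K g)) (p : ℝ) :
    |f2m η γ K lam m g u p - f2m η γ K lam m g u' p|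
      ≤ L * ∫ e in bigJumps m, |u e - u' e| ∂K g := by
  rw [f2m_eq_of_restrict_eq hK, f2m_eq_of_restrict_eq hK, sub_sub_sub_cancel_right]
  exact hH.abs_integral_comp_sub_mul_sub_le (by rw [phim_zero, hpen_zero]) hu hu' hη.integrableOn p

lemma continuous_f2m (hH : LipschitzWith L fun x => hpen lam (phim m x))
    (hK : (K g).restrict {e | γ e = g} = K g) (hη : Integrable η (K g))
    (hu : IntegrableOn u (bigJumps m) (K g)) : Continuous fun p => f2m η γ K lam m g u p := by
  simp_rw [f2m_eq_of_restrict_eq hK]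
  exact (hH.continuous_integral_comp_sub_mul (by rw [phim_zero, hpen_zero]) hu
    hη.integrableOn).sub (continuous_id.mul continuous_const)

lemma bddBelow_range_f2m (hH : LipschitzWith L fun x => hpen lam (phim m x))
    (hK : (K g).restrict {e | γ e = g} = K g) (hη : Integrable η (K g))
    (hu : IntegrableOn u (bigJumps m) (K g)) :
    BddBelow (range fun p : Icc (-pil) pib => f2m η γ K lam m g u p) :=
  ⟨_, by rintro _ ⟨p, rfl⟩; exact neg_le_of_abs_le (abs_f2m_le hH hK hη hu p)⟩

lemma iInf_f2m_eq_iInf_denseSeq [Nonempty (Icc (-pil) pib)]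
    (hH : LipschitzWith L fun x => hpen lam (phim m x))
    (hK : (K g).restrict {e | γ e = g} = K g) (hη : Integrable η (K g))
    (hu : IntegrableOn u (bigJumps m) (K g)) :
    ⨅ p : Icc (-pil) pib, f2m η γ K lam m g u p
      = ⨅ n, f2m η γ K lam m g u (TopologicalSpace.denseSeq (Icc (-pil) pib) n) :=
  ciInf_eq_ciInf_comp_of_denseRange (TopologicalSpace.denseRange_denseSeq _)
    ((continuous_f2m hH hK hη hu).comp continuous_subtype_val) (bddBelow_range_f2m hH hK hη hu)

end Fibre

lemma bind_restrict_compl_zero_eq (hK : Measurable K)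
    (hdis : ∀ B : Set ℝ, MeasurableSet B →
      ν (B ∩ {e | γ e ≠ 0}) = ∫⁻ g in ({0}ᶜ : Set ℝ), K g B ∂μ) :
    (μ.restrict {0}ᶜ).bind K = ν.restrict {e | γ e ≠ 0} :=
  Measure.ext fun B hB => by
    rw [Measure.bind_apply hB hK.aemeasurable, Measure.restrict_apply hB, hdis B hB]

lemma ae_restrict_fibre_eq_self (hγ : Measurable γ)
    (hKprob : ∀ᵐ g ∂μ.restrict ({0}ᶜ : Set ℝ), K g Set.univ = 1 ∧ K g {e | γ e = g} = 1) :
    ∀ᵐ g ∂μ.restrict {0}ᶜ, (K g).restrict {e | γ e = g} = K g := by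
  filter_upwards [hKprob] with g ⟨huniv, hfibre⟩
  have hS : MeasurableSet {e | γ e = g} := hγ (measurableSet_singleton g)
  refine Measure.restrict_eq_self_of_ae_mem (ae_iff.2 ?_)
  rw [← compl_def, measure_compl hS (by simp [hfibre]), huniv, hfibre, tsub_self]

lemma ae_restrict_fibre_eq_self_and_integrable (hK : Measurable K) (hγ : Measurable γ) (hη : Measurable η)
    (hu : Measurable u)
    (hKprob : ∀ᵐ g ∂μ.restrict ({0}ᶜ : Set ℝ), K g Set.univ = 1 ∧ K g {e | γ e = g} = 1)
    (hbind : (μ.restrict {0}ᶜ).bind K = ν.restrict {e | γ e ≠ 0})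
    (hηint : Integrable η (ν.restrict {e | γ e ≠ 0}))
    (huT : IntegrableOn u (bigJumps m) (ν.restrict {e | γ e ≠ 0})) :
    ∀ᵐ g ∂μ.restrict {0}ᶜ, (K g).restrict {e | γ e = g} = K g ∧ Integrable η (K g)
      ∧ IntegrableOn u (bigJumps m) (K g) := by
  filter_upwards [ae_restrict_fibre_eq_self hγ hKprob,
    ae_integrableOn_of_integrableOn_bind hK MeasurableSet.univ hη
      (by rw [hbind, integrableOn_univ]; exact hηint),
    ae_integrableOn_of_integrableOn_bind hK (measurableSet_bigJumps m) hu
      (by rw [hbind]; exact huT)] with g h₁ h₂ h₃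
  exact ⟨h₁, integrableOn_univ.1 h₂, h₃⟩

section Integration

variable [Nonempty (Icc (-pil) pib)]

lemma aemeasurable_iInf_f2m (hH : LipschitzWith L fun x => hpen lam (phim m x))
    (hK : Measurable K) (hη : Measurable η) (hu : Measurable u)
    (hgood : ∀ᵐ g ∂μ, (K g).restrict {e | γ e = g} = K g ∧ Integrable η (K g)
      ∧ IntegrableOn u (bigJumps m) (K g)) :
    AEMeasurable (fun g => ⨅ p : Icc (-pil) pib, f2m η γ K lam m g u p) μ := by
  have hψ (p : ℝ) : Measurable fun g => (∫ e, (bigJumps m).indicator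
      (fun e => hpen lam (phim m (u e - p * η e))) e ∂K g) - p * ∫ e, η e ∂K g :=
    (measurable_integral_of_measurable_measure hK ((hH.continuous.measurable.comp
      (hu.sub (measurable_const.mul hη))).indicator (measurableSet_bigJumps m))).sub
      (measurable_const.mul (measurable_integral_of_measurable_measure hK hη))
  refine (Measurable.iInf fun n =>
    hψ (TopologicalSpace.denseSeq (Icc (-pil) pib) n)).aemeasurable.congr ?_
  filter_upwards [hgood] with g ⟨hKg, hηg, hug⟩
  rw [iInf_f2m_eq_iInf_denseSeq hH hKg hηg hug]
  simp only [f2m_eq_of_restrict_eq hKg, integral_indicator (measurableSet_bigJumps m)]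

lemma integrable_iInf_f2m (hH : LipschitzWith L fun x => hpen lam (phim m x))
    (hK : Measurable K) (hη : Measurable η) (hu : Measurable u)
    (hbind : (μ.restrict {0}ᶜ).bind K = ν.restrict {e | γ e ≠ 0})
    (hηint : Integrable η (ν.restrict {e | γ e ≠ 0}))
    (huT : IntegrableOn u (bigJumps m) (ν.restrict {e | γ e ≠ 0}))
    (hgood : ∀ᵐ g ∂μ.restrict {0}ᶜ, (K g).restrict {e | γ e = g} = K g ∧ Integrable η (K g)
      ∧ IntegrableOn u (bigJumps m) (K g)) :
    Integrable (fun g => ⨅ p : Icc (-pil) pib, f2m η γ K lam m g u p) (μ.restrict {0}ᶜ) := by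
  have hT := measurableSet_bigJumps m
  refine Integrable.mono' (g := fun g => L * ∫ e, (bigJumps m).indicator (fun e => |u e|) e ∂K g
      + (L + 1) * max |pil| |pib| * ∫ e, |η e| ∂K g) ?_
    (aemeasurable_iInf_f2m hH hK hη hu hgood).aestronglyMeasurable ?_
  · refine ((integrable_integral_of_integrable_bind hK (hu.abs.indicator hT)
      (indicator_nonneg fun _ _ => abs_nonneg _) ?_).const_mul _).add
      ((integrable_integral_of_integrable_bind hK hη.abs (fun _ => abs_nonneg _) ?_).const_mul _)
    · rw [hbind]; exact (integrable_indicator_iff hT).2 huT.abs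
    · rw [hbind]; exact hηint.abs
  · filter_upwards [hgood] with g ⟨hKg, hηg, hug⟩
    rw [Real.norm_eq_abs, integral_indicator hT]
    exact abs_ciInf_le (abs_f2m_le hH hKg hηg hug)

lemma abs_integral_iInf_f2m_sub_le (hH : LipschitzWith L fun x => hpen lam (phim m x))
    (hK : Measurable K) (hγ : Measurable γ) (hη : Measurable η) (hu : Measurable u)
    (hu' : Measurable u')
    (hKprob : ∀ᵐ g ∂μ.restrict ({0}ᶜ : Set ℝ), K g Set.univ = 1 ∧ K g {e | γ e = g} = 1)
    (hdis : ∀ B : Set ℝ, MeasurableSet B →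
      ν (B ∩ {e | γ e ≠ 0}) = ∫⁻ g in ({0}ᶜ : Set ℝ), K g B ∂μ)
    (hηint : Integrable η ν) (huT : Integrable u (numeas ν m)) (hu'T : Integrable u' (numeas ν m)) :
    |(∫ g in ({0}ᶜ : Set ℝ), (⨅ p : Icc (-pil) pib, f2m η γ K lam m g u p) ∂μ)
        - ∫ g in ({0}ᶜ : Set ℝ), (⨅ p : Icc (-pil) pib, f2m η γ K lam m g u' p) ∂μ|
      ≤ L * ∫ e in bigJumps m, |u e - u' e| ∂ν.restrict {e | γ e ≠ 0} := by
  have hT := measurableSet_bigJumps m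
  have hbind := bind_restrict_compl_zero_eq hK hdis
  have hρ : (ν.restrict {e | γ e ≠ 0}).restrict (bigJumps m) ≤ numeas ν m :=
    Measure.restrict_mono subset_rfl Measure.restrict_le_self
  replace hηint := hηint.restrict (s := {e | γ e ≠ 0})
  replace huT := huT.mono_measure hρ
  replace hu'T := hu'T.mono_measure hρ
  have hgood := ae_restrict_fibre_eq_self_and_integrable hK hγ hη hu hKprob hbind hηint huT
  have hgood' := ae_restrict_fibre_eq_self_and_integrable hK hγ hη hu' hKprob hbind hηint hu'T
  have hb : Integrable ((bigJumps m).indicator fun e => |u e - u' e|)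
      ((μ.restrict {0}ᶜ).bind K) := by
    rw [hbind]; exact (integrable_indicator_iff hT).2 (huT.sub hu'T).abs
  have hb0 : 0 ≤ (bigJumps m).indicator fun e => |u e - u' e| :=
    indicator_nonneg fun _ _ => abs_nonneg _
  have hbm : Measurable ((bigJumps m).indicator fun e => |u e - u' e|) :=
    (hu.sub hu').abs.indicator hT
  calc _ ≤ ∫ g in ({0}ᶜ : Set ℝ),
        L * ∫ e, (bigJumps m).indicator (fun e => |u e - u' e|) e ∂K g ∂μ :=
        abs_integral_sub_integral_le
          (integrable_iInf_f2m hH hK hη hu hbind hηint huT hgood)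
          (integrable_iInf_f2m hH hK hη hu' hbind hηint hu'T hgood')
          ((integrable_integral_of_integrable_bind hK hbm hb0 hb).const_mul _) <| by
        filter_upwards [hgood, hgood'] with g ⟨hKg, hηg, hug⟩ ⟨_, _, hu'g⟩
        rw [integral_indicator hT]
        exact abs_ciInf_sub_ciInf_le (bddBelow_range_f2m hH hKg hηg hug)
          (abs_f2m_sub_f2m_le hH hKg hηg hug hu'g ·)
    _ = _ := by
      rw [integral_const_mul, integral_integral_eq_integral_bind hK hbm hb0 hb, hbind,
        integral_indicator hT]

end Integration

end Driver

lemma abs_fm_sub_fm_le (ν μ : Measure ℝ) (η γ : ℝ → ℝ) (K : ℝ → Measure ℝ)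
    (lam Cke pil pib : ℝ) (m : ℕ) (z z' : ℝ) (u u' : ℝ → ℝ) :
    |fm ν μ η γ K lam Cke pil pib m z u - fm ν μ η γ K lam Cke pil pib m z' u'|
      ≤ |(⨅ p : Icc (-pil) pib, f1m ν η γ lam Cke m z u p)
          - ⨅ p : Icc (-pil) pib, f1m ν η γ lam Cke m z' u' p|
        + |(∫ g in ({0}ᶜ : Set ℝ), (⨅ p : Icc (-pil) pib, f2m η γ K lam m g u p) ∂μ)
          - ∫ g in ({0}ᶜ : Set ℝ), (⨅ p : Icc (-pil) pib, f2m η γ K lam m g u' p) ∂μ|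
        + |Cke| * |z - z'| := by
  simp only [fm]
  calc _ = |((⨅ p : Icc (-pil) pib, f1m ν η γ lam Cke m z u p)
          - ⨅ p : Icc (-pil) pib, f1m ν η γ lam Cke m z' u' p)
        + ((∫ g in ({0}ᶜ : Set ℝ), (⨅ p : Icc (-pil) pib, f2m η γ K lam m g u p) ∂μ)
          - ∫ g in ({0}ᶜ : Set ℝ), (⨅ p : Icc (-pil) pib, f2m η γ K lam m g u' p) ∂μ)
        + Cke * (z' - z)| := by ring_nf
    _ ≤ _ := (abs_add_three _ _ _).trans_eq (by rw [abs_mul, abs_sub_comm z'])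

theorem fm_lipschitz_general
    (ν : Measure ℝ)
    (hν2 : (∫⁻ e, ENNReal.ofReal (min 1 (e ^ 2)) ∂ν) < ⊤)
    (η γ : ℝ → ℝ) (hηmeas : Measurable η) (hγmeas : Measurable γ)
    (hηint : Integrable η ν)
    (μ : Measure ℝ)
    (K : ℝ → Measure ℝ) (hKmeas : Measurable K)
    (hKprob : ∀ᵐ g ∂μ.restrict ({0}ᶜ : Set ℝ),
      K g Set.univ = 1 ∧ K g {e | γ e = g} = 1)
    (hdis : ∀ B : Set ℝ, MeasurableSet B →
      ν (B ∩ {e | γ e ≠ 0}) = ∫⁻ g in ({0}ᶜ : Set ℝ), K g B ∂μ)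
    (lam pil pib : ℝ) (hlam : 0 < lam) (hpil : 0 < pil) (hpib : 0 < pib)
    (Cke : ℝ)
    (m : ℕ) (hm : 1 ≤ m) :
    ∃ L : ℝ, 0 < L ∧
      ∀ (z z' : ℝ) (u u' : ℝ → ℝ), Measurable u → Measurable u' →
        Integrable (fun e => (u e) ^ 2) ν → Integrable (fun e => (u' e) ^ 2) ν →
        |fm ν μ η γ K lam Cke pil pib m z u - fm ν μ η γ K lam Cke pil pib m z' u'|
          ≤ L * (|z - z'| + Real.sqrt (∫ e, (u e - u' e) ^ 2 ∂ν)) := by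
  obtain ⟨L, hH⟩ : ∃ L : ℝ≥0, LipschitzWith L fun x => hpen lam (phim m x) :=
    ⟨_, lipschitzWith_hpen_phim hlam m⟩
  have hT : ν (bigJumps m) ≠ ∞ := measure_compl_Icc_ne_top hν2 (by positivity)
    (div_le_one_of_le₀ (by exact_mod_cast hm) (by positivity))
  have : Nonempty (Icc (-pil) pib) := ⟨⟨0, neg_nonpos.2 hpil.le, hpib.le⟩⟩
  have : IsFiniteMeasure (ν.restrict (bigJumps m)) := isFiniteMeasure_restrict.2 hT
  set Q := max |pil| |pib| + (m + 1) + |Cke / lam|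
  refine ⟨lam / 2 * (Q ^ 2 + 2 * Q) + |Cke| + 2 * (L : ℝ) * √(ν.real (bigJumps m)), by positivity,
    fun z z' u u' hu hu' hu2 hu'2 => ?_⟩
  have hL2 := (memLp_two_iff_integrable_sq hu.aestronglyMeasurable).2 hu2
  have hL2' := (memLp_two_iff_integrable_sq hu'.aestronglyMeasurable).2 hu'2
  have huT : Integrable u (ν.restrict (bigJumps m)) := (hL2.restrict _).integrable one_le_two
  have hu'T : Integrable u' (ν.restrict (bigJumps m)) := (hL2'.restrict _).integrable one_le_two
  have hcs (ρ : Measure ℝ) (hρ : ρ ≤ ν.restrict (bigJumps m)) :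
      L * ∫ e, |u e - u' e| ∂ρ
        ≤ L * (√(ν.real (bigJumps m)) * √(∫ e, (u e - u' e) ^ 2 ∂ν)) :=
    mul_le_mul_of_nonneg_left (integral_abs_le_sqrt_mul_sqrt_of_le_restrict
      (w := fun e => u e - u' e) hρ hT (hL2.sub hL2')) L.coe_nonneg
  have h₁ := (abs_iInf_f1m_sub_iInf_f1m_le (γ := γ) (Cke := Cke) (pil := pil) (pib := pib) hH
    hlam.le huT hu'T hηint z z').trans (add_le_add le_rfl (hcs _ Measure.restrict_le_self))
  have h₂ := (abs_integral_iInf_f2m_sub_le (pil := pil) (pib := pib) hH hKmeas hγmeas hηmeas hu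
    hu' hKprob hdis hηint huT hu'T).trans
      (hcs _ (Measure.restrict_mono subset_rfl Measure.restrict_le_self))
  refine ((abs_fm_sub_fm_le ν μ η γ K lam Cke pil pib m z z' u u').trans
    (add_le_add (add_le_add h₁ h₂) le_rfl)).trans ?_
  have hC := Real.sqrt_nonneg (ν.real (bigJumps m))
  have hW := Real.sqrt_nonneg (∫ e, (u e - u' e) ^ 2 ∂ν)
  nlinarith [mul_nonneg (mul_nonneg L.coe_nonneg hC) (abs_nonneg (z - z')),
    mul_nonneg (abs_nonneg Cke) hW, mul_nonneg (by positivity : 0 ≤ lam / 2 * (Q ^ 2 + 2 * Q)) hW]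

/-- **Lipschitz continuity of the approximating drivers**: for every `m ≥ 1` there is a
constant `L_m > 0` with
`|f_m(z,u) − f_m(z',u')| ≤ L_m (|z − z'| + (∫ (u − u')² dν)^{1/2})`
for all `z, z' ∈ ℝ` and all Borel square-`ν`-integrable `u, u'`. -/
theorem fm_lipschitz
    (ν : Measure ℝ) [SigmaFinite ν]
    (hν0 : ν {0} = 0)
    (hν2 : (∫⁻ e, ENNReal.ofReal (min 1 (e ^ 2)) ∂ν) < ⊤)
    (η γ : ℝ → ℝ) (hηmeas : Measurable η) (hγmeas : Measurable γ)
    (C₀ : ℝ) (hC₀ : 0 < C₀)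
    (hηb : ∀ e, |η e| ≤ C₀ * min 1 |e|)
    (hγb : ∀ e, |γ e| ≤ C₀ * min 1 |e|)
    (hηint : Integrable η ν)
    (μ : Measure ℝ)
    (hμ : ∀ B : Set ℝ, MeasurableSet B → μ B = ν (γ ⁻¹' (B \ {0})))
    (K : ℝ → Measure ℝ) (hKmeas : Measurable K)
    (hKprob : ∀ᵐ g ∂μ.restrict ({0}ᶜ : Set ℝ),
      K g Set.univ = 1 ∧ K g {e | γ e = g} = 1)
    (hdis : ∀ B : Set ℝ, MeasurableSet B →
      ν (B ∩ {e | γ e ≠ 0}) = ∫⁻ g in ({0}ᶜ : Set ℝ), K g B ∂μ)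
    (lam pil pib : ℝ) (hlam : 0 < lam) (hpil : 0 < pil) (hpib : 0 < pib)
    (Cke : ℝ)
    (m : ℕ) (hm : 1 ≤ m) :
    ∃ L : ℝ, 0 < L ∧
      ∀ (z z' : ℝ) (u u' : ℝ → ℝ), Measurable u → Measurable u' →
        Integrable (fun e => (u e) ^ 2) ν → Integrable (fun e => (u' e) ^ 2) ν →
        |fm ν μ η γ K lam Cke pil pib m z u - fm ν μ η γ K lam Cke pil pib m z' u'|
          ≤ L * (|z - z'| + Real.sqrt (∫ e, (u e - u' e) ^ 2 ∂ν)) :=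
  fm_lipschitz_general ν hν2 η γ hηmeas hγmeas hηint μ K hKmeas hKprob hdis lam pil pib hlam hpil
    hpib Cke m hm
end
end

section
/- Growth bounds for the approximating drivers: For every integer m ≥ 1, every z ∈ ℝ, and every bounded Borel function u : ℝ → ℝ with ∫ u² dν < ∞, one has −C_{κ,η} z − C_{κ,η}²/(2λ) − (π̲ + π̄) ∫_ℝ |η(e)| ν(de) ≤ f_m(z,u) ≤ (λ/2) z² + |u|_λ, where |u|_λ = ∫_ℝ h_λ(u(e)) ν(de). -/
/-!
Each of `f¹_m`, `f²_m` is a nonnegative quantity minus `p` times an integral of `η`, and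
`|p| ≤ π̲ + π̄`; this gives the lower bounds. For the upper bounds take `p = 0` and use
`h_λ ∘ φ_m ≤ h_λ`, `ρ_m ≤ 1`. The disintegration of `ν` on `{γ ≠ 0}` along `K` turns the
`μ`-integral of the signal part into a `ν`-integral over `{γ ≠ 0}`, which together with the
integral over `{γ = 0}` reassembles `∫ |η| dν` and `|u|_λ`. The infimum over `p` need not be
integrable in `g`; where it is not, its integral is `0` by convention, and both bounds
survive because the bounding integrals have the right sign.
-/

open MeasureTheory Set

noncomputable section

open ProbabilityTheory

lemma Real.exp_sub_sub_one_le_sq_mul_exp_abs (t : ℝ) :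
    Real.exp t - t - 1 ≤ t ^ 2 * Real.exp |t| := by
  -- the tangent line of `exp` at `t`, evaluated at `0`
  have htangent : Real.exp t - 1 ≤ t * Real.exp t := by
    have h := Real.add_one_le_exp (-t)
    rw [Real.exp_neg] at h
    have := Real.exp_pos t
    field_simp at h
    linarith
  rcases le_total 0 t with ht | ht
  · rw [abs_of_nonneg ht]
    nlinarith
  · rw [abs_of_nonpos ht]
    nlinarith [Real.add_one_le_exp t, Real.one_le_exp (neg_nonneg.2 ht)]

lemma Real.arctan_le_self {t : ℝ} (ht : 0 ≤ t) : Real.arctan t ≤ t := by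
  simpa only [Real.tan_arctan] using
    Real.le_tan (Real.arctan_nonneg.2 ht) (Real.arctan_lt_pi_div_two t)

section Penalty

variable {lam : ℝ}

lemma hpen_nonneg (hlam : 0 < lam) (x : ℝ) : 0 ≤ hpen lam x :=
  div_nonneg (by linarith [Real.add_one_le_exp (lam * x)]) hlam.le

lemma continuous_hpen (lam : ℝ) : Continuous (hpen lam) := by
  unfold hpen; fun_prop

lemma hpen_le_of_abs_le (hlam : 0 < lam) {x M : ℝ} (hx : |x| ≤ M) :
    hpen lam x ≤ lam * Real.exp (lam * M) * x ^ 2 := by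
  have hexp : Real.exp |lam * x| ≤ Real.exp (lam * M) := by
    rw [Real.exp_le_exp, abs_mul, abs_of_pos hlam]
    exact mul_le_mul_of_nonneg_left hx hlam.le
  rw [hpen, div_le_iff₀ hlam]
  calc Real.exp (lam * x) - lam * x - 1 ≤ (lam * x) ^ 2 * Real.exp |lam * x| :=
        Real.exp_sub_sub_one_le_sq_mul_exp_abs _
    _ ≤ (lam * x) ^ 2 * Real.exp (lam * M) := by gcongr
    _ = lam * Real.exp (lam * M) * x ^ 2 * lam := by ring

lemma hpen_monotoneOn (hlam : 0 < lam) : MonotoneOn (hpen lam) (Ici 0) := by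
  intro a ha b _ hab
  unfold hpen
  gcongr ?_ / lam
  have h1 : 1 ≤ Real.exp (lam * a) := Real.one_le_exp (mul_nonneg hlam.le ha)
  have h2 : lam * (b - a) + 1 ≤ Real.exp (lam * (b - a)) := Real.add_one_le_exp _
  have h3 : Real.exp (lam * b) = Real.exp (lam * a) * Real.exp (lam * (b - a)) := by
    rw [← Real.exp_add]; ring_nf
  nlinarith [mul_nonneg hlam.le (sub_nonneg.2 hab)]

lemma hpen_phim_le (hlam : 0 < lam) (m : ℕ) (x : ℝ) : hpen lam (phim m x) ≤ hpen lam x := by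
  unfold phim phi0
  split_ifs with h
  · have h0 : 0 ≤ Real.arctan (x - m) := Real.arctan_nonneg.2 h.le
    have hle : Real.arctan (x - m) ≤ x - m := Real.arctan_le_self h.le
    exact hpen_monotoneOn hlam (show (0 : ℝ) ≤ _ by positivity) (show (0 : ℝ) ≤ x by linarith)
      (by linarith)
  · rw [sub_add_cancel]

lemma integrable_hpen_comp {ν : Measure ℝ} (hlam : 0 < lam) {u : ℝ → ℝ} (humeas : Measurable u)
    {M : ℝ} (hM : ∀ e, |u e| ≤ M) (hu2 : Integrable (fun e => u e ^ 2) ν) :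
    Integrable (fun e => hpen lam (u e)) ν := by
  refine (hu2.const_mul (lam * Real.exp (lam * M))).mono'
    ((continuous_hpen lam).measurable.comp humeas).aestronglyMeasurable
    (ae_of_all _ fun e => ?_)
  rw [Real.norm_of_nonneg (hpen_nonneg hlam _)]
  exact hpen_le_of_abs_le hlam (hM e)

end Penalty

lemma rhom_nonneg (m : ℕ) (x : ℝ) : 0 ≤ rhom m x := by
  unfold rhom; split_ifs <;> linarith

lemma rhom_le_one (m : ℕ) (x : ℝ) : rhom m x ≤ 1 := by
  unfold rhom; split_ifs <;> linarith

lemma neg_mul_le_sub_mul_of_mem_Icc {a b A I J p : ℝ} (ha : 0 ≤ a) (hb : 0 ≤ b) (hA : 0 ≤ A)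
    (hI : |I| ≤ J) (hp : p ∈ Icc (-a) b) : -((a + b) * J) ≤ A - p * I := by
  have hp' : |p| ≤ a + b := abs_le.2 ⟨by linarith [hp.1], by linarith [hp.2]⟩
  have hpI : |p * I| ≤ (a + b) * J := by
    rw [abs_mul]; exact mul_le_mul hp' hI (abs_nonneg _) (by linarith)
  linarith [(abs_le.1 hpI).2]

lemma ciInf_le_of_forall_le {ι : Sort*} {f : ι → ℝ} {c : ℝ} (h : ∀ i, c ≤ f i) (i : ι) :
    ⨅ j, f j ≤ f i :=
  ciInf_le ⟨c, forall_mem_range.2 h⟩ i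

lemma integral_le_integral_of_le_of_measure_le {α : Type*} [MeasurableSpace α]
    {μ' μ : Measure α} {f g : α → ℝ} (hμ : μ' ≤ μ) (hf : 0 ≤ f) (hfg : f ≤ g)
    (hg : Integrable g μ) : ∫ x, f x ∂μ' ≤ ∫ x, g x ∂μ :=
  (integral_mono_of_nonneg (ae_of_all _ hf) (hg.mono_measure hμ) (ae_of_all _ hfg)).trans
    (integral_mono_measure hμ (ae_of_all _ fun x => (hf x).trans (hfg x)) hg)

lemma integral_le_integral_of_ae_le_of_nonneg {α : Type*} [MeasurableSpace α] {μ : Measure α}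
    {f g : α → ℝ} (hg : Integrable g μ) (hg0 : 0 ≤ᵐ[μ] g) (hfg : f ≤ᵐ[μ] g) :
    ∫ x, f x ∂μ ≤ ∫ x, g x ∂μ := by
  by_cases hf : Integrable f μ
  · exact integral_mono_ae hf hg hfg
  · rw [integral_undef hf]; exact integral_nonneg_of_ae hg0

lemma integral_integral_of_comp_eq {α β : Type*} [MeasurableSpace α] [MeasurableSpace β]
    {ρ : Measure α} {ν : Measure β} {κ : Kernel α β} (h : κ ∘ₘ ρ = ν) {f : β → ℝ}
    (hf : Integrable f ν) :
    (∀ᵐ x ∂ρ, Integrable f (κ x)) ∧ Integrable (fun x => ∫ y, f y ∂κ x) ρ ∧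
      ∫ x, ∫ y, f y ∂κ x ∂ρ = ∫ y, f y ∂ν := by
  subst h
  refine ⟨Measure.ae_integrable_of_integrable_comp hf, ?_⟩
  rw [Measure.comp_eq_comp_const_apply] at hf ⊢
  exact ⟨by simpa using hf.integral_comp, by simpa using (Kernel.integral_comp hf).symm⟩

section Driver

variable {ν μ : Measure ℝ} {η γ : ℝ → ℝ} {K : ℝ → Measure ℝ} {lam Cke pil pib : ℝ} {m : ℕ}
  {z : ℝ} {u : ℝ → ℝ}

lemma f1m_ge (hlam : 0 < lam) (hpil : 0 ≤ pil) (hpib : 0 ≤ pib) {p : ℝ}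
    (hp : p ∈ Icc (-pil) pib) :
    -((pil + pib) * ∫ e in {e | γ e = 0}, |η e| ∂ν) ≤ f1m ν η γ lam Cke m z u p := by
  have hA : 0 ≤ lam / 2 * (p - (z + Cke / lam)) ^ 2 * rhom m z
      + ∫ e in {e | γ e = 0}, hpen lam (phim m (u e - p * η e)) ∂(numeas ν m) :=
    add_nonneg (mul_nonneg (by positivity) (rhom_nonneg m z))
      (integral_nonneg fun e => hpen_nonneg hlam _)
  exact neg_mul_le_sub_mul_of_mem_Icc hpil hpib hA abs_integral_le_integral_abs hp

lemma f1m_zero_le (hlam : 0 < lam) (hu : Integrable (fun e => hpen lam (u e)) ν) :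
    f1m ν η γ lam Cke m z u 0 ≤ lam / 2 * z ^ 2 + Cke * z + Cke ^ 2 / (2 * lam)
      + ∫ e in {e | γ e = 0}, hpen lam (u e) ∂ν := by
  have hquad : lam / 2 * (0 - (z + Cke / lam)) ^ 2 * rhom m z
      ≤ lam / 2 * z ^ 2 + Cke * z + Cke ^ 2 / (2 * lam) :=
    calc _ ≤ lam / 2 * (0 - (z + Cke / lam)) ^ 2 :=
          mul_le_of_le_one_right (by positivity) (rhom_le_one m z)
      _ = _ := by field_simp; ring
  have hpen_part : ∫ e in {e | γ e = 0}, hpen lam (phim m (u e - 0 * η e)) ∂(numeas ν m)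
      ≤ ∫ e in {e | γ e = 0}, hpen lam (u e) ∂ν :=
    integral_le_integral_of_le_of_measure_le
      (Measure.restrict_mono subset_rfl Measure.restrict_le_self) (fun e => hpen_nonneg hlam _)
      (fun e => by simpa using hpen_phim_le hlam m (u e)) hu.restrict
  rw [f1m, zero_mul, sub_zero]
  linarith

lemma f2m_ge (hlam : 0 < lam) (hpil : 0 ≤ pil) (hpib : 0 ≤ pib) {g : ℝ}
    (hη : Integrable η (K g)) {p : ℝ} (hp : p ∈ Icc (-pil) pib) :
    -((pil + pib) * ∫ e, |η e| ∂(K g)) ≤ f2m η γ K lam m g u p := by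
  have hA : 0 ≤ ∫ e in {e | γ e = g},
      (if 1 / (m : ℝ) < |e| then hpen lam (phim m (u e - p * η e)) else 0) ∂(K g) :=
    integral_nonneg fun e => ite_nonneg (hpen_nonneg hlam _) le_rfl
  have hI : |∫ e in {e | γ e = g}, η e ∂(K g)| ≤ ∫ e, |η e| ∂(K g) :=
    abs_integral_le_integral_abs.trans
      (setIntegral_le_integral hη.abs (ae_of_all _ fun e => abs_nonneg _))
  exact neg_mul_le_sub_mul_of_mem_Icc hpil hpib hA hI hp

lemma f2m_zero_le (hlam : 0 < lam) {g : ℝ} (hu : Integrable (fun e => hpen lam (u e)) (K g)) :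
    f2m η γ K lam m g u 0 ≤ ∫ e, hpen lam (u e) ∂(K g) := by
  rw [f2m, zero_mul, sub_zero]
  refine integral_le_integral_of_le_of_measure_le Measure.restrict_le_self
    (fun e => ite_nonneg (hpen_nonneg hlam _) le_rfl) (fun e => ?_) hu
  dsimp only
  split_ifs
  · simpa using hpen_phim_le hlam m (u e)
  · exact hpen_nonneg hlam _

lemma le_iInf_f1m (hlam : 0 < lam) (hpil : 0 ≤ pil) (hpib : 0 ≤ pib) :
    -((pil + pib) * ∫ e in {e | γ e = 0}, |η e| ∂ν)
      ≤ ⨅ p : Icc (-pil) pib, f1m ν η γ lam Cke m z u p := by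
  have : Nonempty (Icc (-pil) pib) := ⟨⟨0, neg_nonpos.2 hpil, hpib⟩⟩
  exact le_ciInf fun p => f1m_ge hlam hpil hpib p.2

lemma iInf_f1m_le (hlam : 0 < lam) (hpil : 0 ≤ pil) (hpib : 0 ≤ pib)
    (hu : Integrable (fun e => hpen lam (u e)) ν) :
    ⨅ p : Icc (-pil) pib, f1m ν η γ lam Cke m z u p
      ≤ lam / 2 * z ^ 2 + Cke * z + Cke ^ 2 / (2 * lam)
        + ∫ e in {e | γ e = 0}, hpen lam (u e) ∂ν :=
  (ciInf_le_of_forall_le (fun p : Icc (-pil) pib => f1m_ge hlam hpil hpib p.2)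
    ⟨0, neg_nonpos.2 hpil, hpib⟩).trans (f1m_zero_le hlam hu)

lemma comp_restrict_compl_zero (hK : Measurable K)
    (hdis : ∀ B : Set ℝ, MeasurableSet B →
      ν (B ∩ {e | γ e ≠ 0}) = ∫⁻ g in ({0}ᶜ : Set ℝ), K g B ∂μ) :
    (⟨K, hK⟩ : Kernel ℝ ℝ) ∘ₘ μ.restrict {0}ᶜ = ν.restrict {e | γ e = 0}ᶜ := by
  ext s hs
  rw [Measure.bind_apply hs (Kernel.aemeasurable _), Measure.restrict_apply hs]
  exact (hdis s hs).symm

lemma neg_le_integral_iInf_f2m {κ : Kernel ℝ ℝ} (hκ : κ ∘ₘ μ.restrict {0}ᶜ = ν.restrict {e | γ e = 0}ᶜ)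
    (hlam : 0 < lam) (hpil : 0 ≤ pil) (hpib : 0 ≤ pib)
    (hη : Integrable η ν) :
    -((pil + pib) * ∫ e in {e | γ e = 0}ᶜ, |η e| ∂ν)
      ≤ ∫ g in ({0}ᶜ : Set ℝ), (⨅ p : Icc (-pil) pib, f2m η γ κ lam m g u p) ∂μ := by
  have : Nonempty (Icc (-pil) pib) := ⟨⟨0, neg_nonpos.2 hpil, hpib⟩⟩
  obtain ⟨hηK, -, -⟩ := integral_integral_of_comp_eq hκ hη.restrict
  obtain ⟨-, hint, heq⟩ := integral_integral_of_comp_eq hκ hη.abs.restrict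
  have h := integral_le_integral_of_ae_le_of_nonneg
    (f := fun g => -⨅ p : Icc (-pil) pib, f2m η γ κ lam m g u p) (hint.const_mul (pil + pib))
    (ae_of_all _ fun g => mul_nonneg (by linarith) (integral_nonneg fun _ => abs_nonneg _))
    (hηK.mono fun g hg => neg_le.1 (le_ciInf fun p => f2m_ge hlam hpil hpib hg p.2))
  rw [integral_neg, integral_const_mul, heq] at h
  linarith

lemma integral_iInf_f2m_le {κ : Kernel ℝ ℝ} (hκ : κ ∘ₘ μ.restrict {0}ᶜ = ν.restrict {e | γ e = 0}ᶜ)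
    (hlam : 0 < lam) (hpil : 0 ≤ pil) (hpib : 0 ≤ pib)
    (hη : Integrable η ν) (hu : Integrable (fun e => hpen lam (u e)) ν) :
    ∫ g in ({0}ᶜ : Set ℝ), (⨅ p : Icc (-pil) pib, f2m η γ κ lam m g u p) ∂μ
      ≤ ∫ e in {e | γ e = 0}ᶜ, hpen lam (u e) ∂ν := by
  obtain ⟨hηK, -, -⟩ := integral_integral_of_comp_eq hκ hη.restrict
  obtain ⟨huK, hint, heq⟩ := integral_integral_of_comp_eq hκ hu.restrict
  rw [← heq]
  refine integral_le_integral_of_ae_le_of_nonneg hint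
    (ae_of_all _ fun g => integral_nonneg fun _ => hpen_nonneg hlam _)
    ((hηK.and huK).mono fun g hg => ?_)
  exact (ciInf_le_of_forall_le (fun p : Icc (-pil) pib => f2m_ge hlam hpil hpib hg.1 p.2)
    ⟨0, neg_nonpos.2 hpil, hpib⟩).trans (f2m_zero_le hlam hg.2)

end Driver

theorem fm_growth_bounds_general
    (ν : Measure ℝ)
    (η γ : ℝ → ℝ) (hγmeas : Measurable γ)
    (hηint : Integrable η ν)
    (μ : Measure ℝ)
    (K : ℝ → Measure ℝ) (hKmeas : Measurable K)
    (hdis : ∀ B : Set ℝ, MeasurableSet B →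
      ν (B ∩ {e | γ e ≠ 0}) = ∫⁻ g in ({0}ᶜ : Set ℝ), K g B ∂μ)
    (lam pil pib : ℝ) (hlam : 0 < lam) (hpil : 0 < pil) (hpib : 0 < pib)
    (Cke : ℝ)
    (m : ℕ)
    (z : ℝ) (u : ℝ → ℝ) (humeas : Measurable u)
    (hub : ∃ M : ℝ, ∀ e, |u e| ≤ M)
    (hu2 : Integrable (fun e => (u e) ^ 2) ν) :
    -Cke * z - Cke ^ 2 / (2 * lam) - (pil + pib) * (∫ e, |η e| ∂ν)
        ≤ fm ν μ η γ K lam Cke pil pib m z u ∧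
      fm ν μ η γ K lam Cke pil pib m z u ≤ lam / 2 * z ^ 2 + ∫ e, hpen lam (u e) ∂ν := by
  obtain ⟨M, hM⟩ := hub
  have hu := integrable_hpen_comp hlam humeas hM hu2
  have hS : MeasurableSet {e | γ e = 0} := hγmeas (measurableSet_singleton 0)
  have hη_split := integral_add_compl hS hηint.abs
  have hu_split := integral_add_compl hS hu
  have hκ := comp_restrict_compl_zero hKmeas hdis
  have h1_ge : _ ≤ ⨅ p : Icc (-pil) pib, f1m ν η γ lam Cke m z u p :=
    le_iInf_f1m hlam hpil.le hpib.le
  have h1_le : ⨅ p : Icc (-pil) pib, f1m ν η γ lam Cke m z u p ≤ _ :=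
    iInf_f1m_le hlam hpil.le hpib.le hu
  have h2_ge : _ ≤ ∫ g in ({0}ᶜ : Set ℝ), (⨅ p : Icc (-pil) pib, f2m η γ K lam m g u p) ∂μ :=
    neg_le_integral_iInf_f2m hκ hlam hpil.le hpib.le hηint
  have h2_le : ∫ g in ({0}ᶜ : Set ℝ), (⨅ p : Icc (-pil) pib, f2m η γ K lam m g u p) ∂μ ≤ _ :=
    integral_iInf_f2m_le hκ hlam hpil.le hpib.le hηint hu
  rw [fm, ← hη_split, ← hu_split]
  constructor <;> linarith

/-- **Growth bounds for the approximating drivers**: for every `m ≥ 1`, `z ∈ ℝ` and bounded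
Borel `u` with `∫ u² dν < ∞`,
`−C_{κ,η} z − C_{κ,η}²/(2λ) − (π̲ + π̄) ∫ |η| dν ≤ f_m(z,u) ≤ (λ/2) z² + |u|_λ`,
where `|u|_λ = ∫ h_λ(u(e)) ν(de)`. -/
theorem fm_growth_bounds
    (ν : Measure ℝ) [SigmaFinite ν]
    (hν0 : ν {0} = 0)
    (hν2 : (∫⁻ e, ENNReal.ofReal (min 1 (e ^ 2)) ∂ν) < ⊤)
    (η γ : ℝ → ℝ) (hηmeas : Measurable η) (hγmeas : Measurable γ)
    (C₀ : ℝ) (hC₀ : 0 < C₀)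
    (hηb : ∀ e, |η e| ≤ C₀ * min 1 |e|)
    (hγb : ∀ e, |γ e| ≤ C₀ * min 1 |e|)
    (hηint : Integrable η ν)
    (μ : Measure ℝ)
    (hμ : ∀ B : Set ℝ, MeasurableSet B → μ B = ν (γ ⁻¹' (B \ {0})))
    (K : ℝ → Measure ℝ) (hKmeas : Measurable K)
    (hKprob : ∀ᵐ g ∂μ.restrict ({0}ᶜ : Set ℝ),
      K g Set.univ = 1 ∧ K g {e | γ e = g} = 1)
    (hdis : ∀ B : Set ℝ, MeasurableSet B →
      ν (B ∩ {e | γ e ≠ 0}) = ∫⁻ g in ({0}ᶜ : Set ℝ), K g B ∂μ)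
    (lam pil pib : ℝ) (hlam : 0 < lam) (hpil : 0 < pil) (hpib : 0 < pib)
    (Cke : ℝ)
    (m : ℕ) (hm : 1 ≤ m)
    (z : ℝ) (u : ℝ → ℝ) (humeas : Measurable u)
    (hub : ∃ M : ℝ, ∀ e, |u e| ≤ M)
    (hu2 : Integrable (fun e => (u e) ^ 2) ν) :
    -Cke * z - Cke ^ 2 / (2 * lam) - (pil + pib) * (∫ e, |η e| ∂ν)
        ≤ fm ν μ η γ K lam Cke pil pib m z u ∧
      fm ν μ η γ K lam Cke pil pib m z u ≤ lam / 2 * z ^ 2 + ∫ e, hpen lam (u e) ∂ν :=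
  fm_growth_bounds_general ν η γ hγmeas hηint μ K hKmeas hdis lam pil pib hlam hpil hpib Cke m z u
    humeas hub hu2
end
end
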